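/- arXiv:math/0501364 — 11 statements merged into one kernel-verified Lean document; each statement's English description precedes it below -/
import Mathlib

section
/- Every finite lattice L admits an embedding into a finite, atomistic, biatomic lattice M that preserves joins, meets, zero, one, and the property of being an atom. -/
/-!
Embed `L` by `x ↦ Iic x` into the sets of the form `{⊥, y}` or `Iic v`, ordered by inclusion.
These sets are closed under arbitrary intersections, so they form a complete lattice in which
meets are intersections and `Iic (x ⊔ y)` is the least such set containing `Iic x ∪ Iic y`.
The atoms are the pairs `{⊥, y}` with `y ≠ ⊥`, one for every nonzero element of `L`, which makes
the lattice atomistic. For biatomicity, if `{⊥, t} ≤ A ⊔ B` with `t` in neither `A` nor `B`, then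
`{⊥, sSup A}` and `{⊥, sSup B}` are distinct atoms below `A` and `B`, and their join is
`Iic (sSup A ⊔ sSup B)`, which contains `t`.
-/

def IsBiatomicLat (L : Type*) [Lattice L] [OrderBot L] : Prop :=
  (∀ x : L, x ≠ ⊥ → ∃ p : L, IsAtom p ∧ p ≤ x) ∧
  ∀ p a b : L, IsAtom p → a ≠ ⊥ → b ≠ ⊥ → p ≤ a ⊔ b →
    ∃ x y : L, IsAtom x ∧ x ≤ a ∧ IsAtom y ∧ y ≤ b ∧ p ≤ x ⊔ y

/-- Atomistic: every element is a join of atoms. -/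
def AtomisticLat (L : Type*) [Lattice L] [OrderBot L] : Prop :=
  ∀ x : L, ∃ s : Set L, (∀ p ∈ s, IsAtom p) ∧ IsLUB s x

open Set

variable {L : Type*} [CompleteLattice L]

def IsPairOrIic (S : Set L) : Prop :=
  (∃ y, S = {⊥, y}) ∨ ∃ v, S = Iic v

namespace IsPairOrIic

variable {S : Set L} {a b : L}

lemma bot_mem (hS : IsPairOrIic S) : ⊥ ∈ S := by
  rcases hS with ⟨y, rfl⟩ | ⟨v, rfl⟩
  · exact mem_insert ⊥ {y}
  · exact bot_le

lemma of_bot_mem_of_subset_pair {y : L} (h₀ : ⊥ ∈ S) (hS : S ⊆ {⊥, y}) : IsPairOrIic S := by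
  refine Or.inl ?_
  by_cases hy : y ∈ S
  · exact ⟨y, hS.antisymm (insert_subset h₀ (singleton_subset_iff.mpr hy))⟩
  · refine ⟨⊥, Subset.antisymm (fun z hz => ?_) (by simpa using h₀)⟩
    rcases hS hz with rfl | rfl
    · simp
    · exact absurd hz hy

lemma sInter {s : Set (Set L)} (hs : ∀ S ∈ s, IsPairOrIic S) : IsPairOrIic (⋂₀ s) := by
  by_cases hpair : ∃ y, {⊥, y} ∈ s
  · obtain ⟨y, hy⟩ := hpair
    exact of_bot_mem_of_subset_pair (mem_sInter.mpr fun S hS => (hs S hS).bot_mem)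
      (sInter_subset_of_mem hy)
  · push Not at hpair
    refine Or.inr ⟨sInf (Iic ⁻¹' s), ?_⟩
    ext z
    simp only [mem_sInter, mem_Iic, le_sInf_iff, mem_preimage]
    refine ⟨fun hz v hv => hz _ hv, fun hz S hS => ?_⟩
    obtain ⟨y, rfl⟩ | ⟨v, rfl⟩ := hs S hS
    · exact absurd hS (hpair y)
    · exact hz v hS

lemma eq_pair_sSup_or_eq_Iic_sSup (hS : IsPairOrIic S) : S = {⊥, sSup S} ∨ S = Iic (sSup S) := by
  rcases hS with ⟨y, rfl⟩ | ⟨v, rfl⟩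
  · simp
  · simp [csSup_Iic]

lemma sSup_mem (hS : IsPairOrIic S) : sSup S ∈ S := by
  rcases hS with ⟨y, rfl⟩ | ⟨v, rfl⟩ <;> simp [csSup_Iic]

lemma Iic_sup_subset (hS : IsPairOrIic S) (ha : a ∈ S) (hb : b ∈ S) (ha₀ : a ≠ ⊥)
    (hb₀ : b ≠ ⊥) (hab : a ≠ b) : Iic (a ⊔ b) ⊆ S := by
  rcases hS with ⟨y, rfl⟩ | ⟨v, rfl⟩
  · simp only [mem_insert_iff, mem_singleton_iff] at ha hb
    grind
  · exact Iic_subset_Iic.mpr (sup_le ha hb)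

end IsPairOrIic

variable (L) in
def pairIicClosure : ClosureOperator (Set L) :=
  .ofCompletePred IsPairOrIic fun _ => IsPairOrIic.sInter

variable (L) in
abbrev PairIic : Type _ := (pairIicClosure L).Closeds

namespace PairIic

noncomputable instance : CompleteLattice (PairIic L) := (pairIicClosure L).gi.liftCompleteLattice

lemma le_iff {A B : PairIic L} : A ≤ B ↔ (A : Set L) ⊆ B := Iff.rfl

lemma isPairOrIic (A : PairIic L) : IsPairOrIic (A : Set L) := A.2

def pair (y : L) : PairIic L := ⟨{⊥, y}, Or.inl ⟨y, rfl⟩⟩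

def iic (x : L) : PairIic L := ⟨Iic x, Or.inr ⟨x, rfl⟩⟩

variable {A B : PairIic L} {x y : L}

lemma bot_mem (A : PairIic L) : ⊥ ∈ (A : Set L) := A.2.bot_mem

lemma pair_le_iff : pair y ≤ A ↔ y ∈ (A : Set L) := by
  simp [le_iff, pair, insert_subset_iff, A.bot_mem]

lemma coe_bot : ((⊥ : PairIic L) : Set L) = {⊥} :=
  Subset.antisymm ((le_iff.mp (bot_le (a := pair (⊥ : L)))).trans (by simp [pair]))
    (singleton_subset_iff.mpr (bot_mem ⊥))

lemma ne_bot_iff_exists : A ≠ ⊥ ↔ ∃ y ∈ (A : Set L), y ≠ ⊥ := by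
  rw [ne_eq, ← Subtype.coe_inj, coe_bot]
  constructor
  · intro hA
    by_contra! h
    exact hA (Subset.antisymm h (singleton_subset_iff.mpr A.bot_mem))
  · rintro ⟨y, hy, hy₀⟩ hA
    exact hy₀ (by simpa [hA] using hy)

lemma isAtom_pair (hy : y ≠ ⊥) : IsAtom (pair y) := by
  refine ⟨ne_bot_iff_exists.mpr ⟨y, by simp [pair], hy⟩, fun B hB => ?_⟩
  by_contra hB₀
  obtain ⟨z, hz, hz₀⟩ := ne_bot_iff_exists.mp hB₀
  have hzy : z = y := by simpa [pair, hz₀] using le_iff.mp hB.le hz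
  exact hB.not_ge (pair_le_iff.mpr (hzy ▸ hz))

lemma isAtom_iff : IsAtom A ↔ ∃ y ≠ ⊥, A = pair y := by
  refine ⟨fun hA => ?_, fun ⟨y, hy, hA⟩ => hA ▸ isAtom_pair hy⟩
  obtain ⟨y, hy, hy₀⟩ := ne_bot_iff_exists.mp hA.ne_bot
  refine ⟨y, hy₀, ((hA.le_iff.mp (pair_le_iff.mpr hy)).resolve_left (isAtom_pair hy₀).ne_bot).symm⟩

instance : IsAtomistic (PairIic L) := by
  refine ⟨fun A => ⟨{B | IsAtom B ∧ B ≤ A}, ⟨fun B hB => hB.2, fun W hW z hz => ?_⟩,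
    fun B hB => hB.1⟩⟩
  by_cases hz₀ : z = ⊥
  · exact hz₀ ▸ W.bot_mem
  · exact pair_le_iff.mp (hW ⟨isAtom_pair hz₀, pair_le_iff.mpr hz⟩)

lemma iic_mono (h : x ≤ y) : iic x ≤ iic y := Iic_subset_Iic.mpr h

lemma iic_injective : Function.Injective (iic : L → PairIic L) := fun _ _ h =>
  Iic_injective (congrArg Subtype.val h)

lemma iic_bot : iic (⊥ : L) = ⊥ := Subtype.ext (Iic_bot.trans coe_bot.symm)

lemma iic_top : iic (⊤ : L) = ⊤ := top_unique fun _ _ => le_top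

lemma iic_inf (x y : L) : iic (x ⊓ y) = iic x ⊓ iic y :=
  le_antisymm (le_inf (iic_mono inf_le_left) (iic_mono inf_le_right))
    fun _ hz => le_inf (le_iff.mp inf_le_left hz) (le_iff.mp inf_le_right hz)

lemma iic_sup (x y : L) : iic (x ⊔ y) = iic x ⊔ iic y := by
  refine le_antisymm ?_ (sup_le (iic_mono le_sup_left) (iic_mono le_sup_right))
  rcases eq_or_ne x ⊥ with rfl | hx
  · rw [bot_sup_eq, iic_bot, bot_sup_eq]
  rcases eq_or_ne y ⊥ with rfl | hy
  · rw [sup_bot_eq, iic_bot, sup_bot_eq]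
  rcases eq_or_ne x y with rfl | hxy
  · rw [sup_idem, sup_idem]
  exact (iic x ⊔ iic y).isPairOrIic.Iic_sup_subset (le_iff.mp le_sup_left le_rfl)
    (le_iff.mp le_sup_right le_rfl) hx hy hxy

lemma isAtom_iic : IsAtom (iic x) ↔ IsAtom x := by
  refine ⟨fun h => ?_, fun hx => isAtom_iff.mpr ⟨x, hx.ne_bot, ?_⟩⟩
  · obtain ⟨y, hy₀, hxy⟩ := isAtom_iff.mp h
    have hIic : Iic x = {⊥, y} := congrArg Subtype.val hxy
    have hyx : y ≤ x := by rw [← mem_Iic, hIic]; exact Or.inr rfl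
    have hx : x ∈ ({⊥, y} : Set L) := by rw [← hIic]; exact le_rfl
    obtain rfl : x = y := hx.resolve_left fun hx₀ => hy₀ (le_bot_iff.mp (hx₀ ▸ hyx))
    refine isAtom_iff_le_of_ge.mpr ⟨hy₀, fun b hb₀ hbx => ?_⟩
    rw [← mem_Iic, hIic] at hbx
    exact (hbx.resolve_left hb₀).ge
  · ext z
    simp [iic, pair, hx.le_iff]

lemma le_iic_sSup (A : PairIic L) : A ≤ iic (sSup (A : Set L)) := fun _ hz => le_sSup hz

lemma sSup_ne_bot (hA : A ≠ ⊥) : sSup (A : Set L) ≠ ⊥ := by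
  obtain ⟨y, hy, hy₀⟩ := ne_bot_iff_exists.mp hA
  exact fun h => hy₀ (le_bot_iff.mp (h ▸ le_sSup hy))

lemma mem_pair_sSup_sup_pair_sSup (hA : A ≠ ⊥) (hB : B ≠ ⊥) {t : L}
    (ht : t ∈ ((A ⊔ B : PairIic L) : Set L)) (htA : t ∉ (A : Set L)) (htB : t ∉ (B : Set L)) :
    t ∈ ((pair (sSup (A : Set L)) ⊔ pair (sSup (B : Set L)) : PairIic L) : Set L) := by
  set a := sSup (A : Set L)
  set b := sSup (B : Set L)
  have htab : t ≤ a ⊔ b := le_iff.mp (sup_le ((le_iic_sSup A).trans (iic_mono le_sup_left))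
    ((le_iic_sSup B).trans (iic_mono le_sup_right))) ht
  have hab : a ≠ b := by
    -- otherwise neither `A` nor `B` can be `Iic a`, which contains `t`, so both are `{⊥, a}`
    intro hab
    have eq_pair : ∀ C : PairIic L, sSup (C : Set L) = a → t ∉ (C : Set L) →
        (C : Set L) = {⊥, a} := fun C hC htC => by
      rcases C.isPairOrIic.eq_pair_sSup_or_eq_Iic_sSup with h | h <;> rw [hC] at h
      · exact h
      · exact absurd (h ▸ by simpa [hab] using htab) htC
    have hAB : A = B := Subtype.ext ((eq_pair A rfl htA).trans (eq_pair B hab.symm htB).symm)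
    rw [hAB, sup_idem] at ht
    exact htB ht
  exact (pair a ⊔ pair b).isPairOrIic.Iic_sup_subset (pair_le_iff.mp le_sup_left)
    (pair_le_iff.mp le_sup_right) (sSup_ne_bot hA) (sSup_ne_bot hB) hab htab

lemma isBiatomicLat : IsBiatomicLat (PairIic L) := by
  refine ⟨fun A hA => (eq_bot_or_exists_atom_le A).resolve_left hA, fun P A B hP hA hB hPAB => ?_⟩
  obtain ⟨t, -, rfl⟩ := isAtom_iff.mp hP
  have ht := pair_le_iff.mp hPAB
  by_cases htA : t ∈ (A : Set L)
  · obtain ⟨q, hq, hqB⟩ := (eq_bot_or_exists_atom_le B).resolve_left hB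
    exact ⟨pair t, q, hP, pair_le_iff.mpr htA, hq, hqB, le_sup_left⟩
  by_cases htB : t ∈ (B : Set L)
  · obtain ⟨q, hq, hqA⟩ := (eq_bot_or_exists_atom_le A).resolve_left hA
    exact ⟨q, pair t, hq, hqA, hP, pair_le_iff.mpr htB, le_sup_right⟩
  exact ⟨_, _, isAtom_pair (sSup_ne_bot hA), pair_le_iff.mpr A.isPairOrIic.sSup_mem,
    isAtom_pair (sSup_ne_bot hB), pair_le_iff.mpr B.isPairOrIic.sSup_mem,
    pair_le_iff.mpr (mem_pair_sSup_sup_pair_sSup hA hB ht htA htB)⟩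

end PairIic

theorem stmt_2 (L : Type) [Lattice L] [Fintype L] [BoundedOrder L] :
    ∃ (M : Type) (_ : Lattice M) (_ : Fintype M) (_ : BoundedOrder M)
      (f : L → M),
      Function.Injective f ∧
      (∀ x y : L, f (x ⊔ y) = f x ⊔ f y) ∧
      (∀ x y : L, f (x ⊓ y) = f x ⊓ f y) ∧
      f ⊥ = ⊥ ∧ f ⊤ = ⊤ ∧
      (∀ x : L, IsAtom (f x) ↔ IsAtom x) ∧
      AtomisticLat M ∧ IsBiatomicLat M := by
  let _ : CompleteLattice L := Fintype.toCompleteLattice L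
  exact ⟨PairIic L, inferInstance, Fintype.ofFinite _, inferInstance, PairIic.iic,
    PairIic.iic_injective, PairIic.iic_sup, PairIic.iic_inf, PairIic.iic_bot, PairIic.iic_top,
    fun _ => PairIic.isAtom_iic, fun A => (isLUB_atoms A).imp fun _ hs => ⟨hs.2, hs.1⟩,
    PairIic.isBiatomicLat⟩
end

section
/- Let K be a join-semidistributive lattice with zero, let a ∈ K, and let X and Y be finite sets of atoms of K. If a ∨ ⋁X = a ∨ ⋁Y, then a ∨ ⋁X = a ∨ ⋁(X ∩ Y). -/
/-!
Let `b = a ⊔ ⋁X = a ⊔ ⋁Y` and let `p ∈ X \ Y`. With `u = a ⊔ ⋁(X \ {p})` we have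
`u ⊔ p = b = u ⊔ ⋁Y`, and `p` is disjoint from every atom of `Y`. Peeling the atoms of `Y`
off one at a time with join-semidistributivity (`x ⊔ y = x ⊔ z` with `y ⊓ z = ⊥` forces
`y ≤ x`) shows `p ≤ u`, so `p` can be dropped from `X`. Dropping all of `X \ Y` in turn
leaves `X ∩ Y`.
-/

/-- A lattice is join-semidistributive if `x ⊔ y = x ⊔ z` implies
`x ⊔ y = x ⊔ (y ⊓ z)`. -/
def JoinSemidistributive (L : Type*) [Lattice L] : Prop :=
  ∀ x y z : L, x ⊔ y = x ⊔ z → x ⊔ y = x ⊔ (y ⊓ z)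

namespace JoinSemidistributive

variable {K : Type*} [Lattice K] [OrderBot K]

theorem le_of_sup_eq_sup_of_disjoint (hSD : JoinSemidistributive K) {x y z : K}
    (h : x ⊔ y = x ⊔ z) (hyz : Disjoint y z) : y ≤ x := by
  have := hSD x y z h
  rw [hyz.eq_bot, sup_bot_eq] at this
  exact le_sup_right.trans this.le

theorem le_of_sup_eq_sup_finsetSup (hSD : JoinSemidistributive K) {ι : Type*} {q u : K}
    {s : Finset ι} {f : ι → K} (hs : ∀ i ∈ s, Disjoint q (f i))
    (h : u ⊔ q = u ⊔ s.sup f) : q ≤ u := by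
  induction s using Finset.cons_induction with
  | empty => simpa using le_sup_right.trans h.le
  | cons i s _ ih =>
    rw [Finset.sup_cons] at h
    have hq : q ≤ u ⊔ s.sup f := by
      refine hSD.le_of_sup_eq_sup_of_disjoint (z := f i) ?_ (hs i (Finset.mem_cons_self i s))
      calc u ⊔ s.sup f ⊔ q = u ⊔ q ⊔ s.sup f := by ac_rfl
        _ = u ⊔ (f i ⊔ s.sup f) := by rw [h, sup_assoc, sup_assoc, sup_idem]
        _ = u ⊔ s.sup f ⊔ f i := by ac_rfl
    refine ih (fun j hj => hs j (Finset.mem_cons_of_mem hj)) (le_antisymm ?_ ?_)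
    · exact sup_le le_sup_left hq
    · rw [h]
      exact sup_le_sup_left le_sup_right u

theorem sup_sup_erase_eq_of_notMem (hSD : JoinSemidistributive K) [DecidableEq K]
    {a p : K} {X Y : Finset K} (hp : IsAtom p) (hY : ∀ q ∈ Y, IsAtom q) (hpX : p ∈ X)
    (hpY : p ∉ Y) (h : a ⊔ X.sup id = a ⊔ Y.sup id) :
    a ⊔ (X.erase p).sup id = a ⊔ X.sup id := by
  set u := a ⊔ (X.erase p).sup id
  have hup : u ⊔ p = a ⊔ X.sup id := by
    conv_rhs => rw [← Finset.insert_erase hpX, Finset.sup_insert, id, sup_comm p, ← sup_assoc]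
  have huY : u ⊔ Y.sup id = a ⊔ Y.sup id := by
    refine le_antisymm (sup_le ?_ le_sup_right) (sup_le_sup_right le_sup_left _)
    rw [← h, ← hup]
    exact le_sup_left
  have hpu : p ≤ u := by
    refine hSD.le_of_sup_eq_sup_finsetSup (fun q hq => hp.disjoint_of_ne (hY q hq) ?_)
      (hup.trans (h.trans huY.symm))
    rintro rfl
    exact hpY hq
  rw [← hup, sup_eq_left.mpr hpu]

end JoinSemidistributive

theorem stmt_4 (K : Type*) [Lattice K] [OrderBot K] [DecidableEq K]
    (hSD : JoinSemidistributive K) (a : K) (X Y : Finset K)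
    (hX : ∀ p ∈ X, IsAtom p) (hY : ∀ p ∈ Y, IsAtom p)
    (h : a ⊔ X.sup id = a ⊔ Y.sup id) :
    a ⊔ X.sup id = a ⊔ (X ∩ Y).sup id := by
  induction X using Finset.strongInduction with
  | _ X ih =>
  by_cases hXY : X ⊆ Y
  · rw [Finset.inter_eq_left.mpr hXY]
  obtain ⟨p, hpX, hpY⟩ := Finset.not_subset.mp hXY
  have hdrop := hSD.sup_sup_erase_eq_of_notMem (hX p hpX) hY hpX hpY h
  have hrest := ih (X.erase p) (Finset.erase_ssubset hpX)
    (fun q hq => hX q (Finset.mem_of_mem_erase hq)) (hdrop.trans h)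
  rw [← hdrop, hrest, Finset.erase_inter,
    Finset.erase_eq_of_notMem fun hp => hpY (Finset.mem_inter.mp hp).2]
end

section
/- Let L be a noetherian, biatomic, join-semidistributive lattice with zero and let a ∈ L. Put S = {atoms of L below a} and let T be the set of all joins of finite (possibly empty) subsets of S, ordered as a subposet of L. Then T is a noetherian, biatomic, join-semidistributive, atomistic lattice whose atoms are exactly the elements of S. -/
def NoetherianOrd (L : Type*) [Preorder L] : Prop :=
  ∀ s : Set L, s.Nonempty → ∃ m ∈ s, ∀ x ∈ s, ¬ m < x

/-!
Joins of atoms below `a` form a join-subsemilattice `T` of `L` containing `⊥`. Since `L` is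
noetherian, any `x, y ∈ T` have a meet in `T`: a maximal common lower bound lying in `T`, which is
greatest because the common lower bounds in `T` are closed under joins.

Every element of `T` lies below `a`, so `T` contains every atom of `L` below one of its elements.
Hence the atoms of `T` are those of `L` in `T`, and biatomicity passes from `L` to `T`. For
join-semidistributivity, `x ⊔ y = x ⊔ z` gives `y ≤ x ⊔ (y ⊓ z)` in `L`, and biatomicity puts each
atom `q ≤ y` below `x ⊔ r` for some atom `r ≤ y ⊓ z`; such an `r` lies in `T`, hence below the
meet of `y` and `z` in `T`. As `y` is the join of these atoms `q`, the inequality holds in `T`.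
-/

section Noetherian

variable {α β : Type*}

theorem NoetherianOrd.of_strictMono [Preorder α] [Preorder β] {f : α → β} (hf : StrictMono f)
    (hN : NoetherianOrd β) : NoetherianOrd α := by
  rintro s ⟨x, hx⟩
  obtain ⟨_, ⟨m, hm, rfl⟩, hmax⟩ := hN (f '' s) ⟨f x, x, hx, rfl⟩
  exact ⟨m, hm, fun y hy hmy => hmax (f y) ⟨y, hy, rfl⟩ (hf hmy)⟩

theorem NoetherianOrd.exists_isGreatest [SemilatticeSup α] (hN : NoetherianOrd α) {s : Set α}
    (hs : SupClosed s) (hne : s.Nonempty) : ∃ m, IsGreatest s m := by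
  obtain ⟨m, hm, hmax⟩ := hN s hne
  exact ⟨m, hm, fun x hx => not_not.1 fun h => hmax _ (hs hm hx) (left_lt_sup.2 h)⟩

variable [Lattice α] [OrderBot α]

theorem NoetherianOrd.exists_isGreatest_lowerBound_mem (hN : NoetherianOrd α) {T : Set α}
    (hT : SupClosed T) (hbot : ⊥ ∈ T) (x y : α) :
    ∃ m, IsGreatest {t ∈ T | t ≤ x ∧ t ≤ y} m :=
  hN.exists_isGreatest
    (fun _ h₁ _ h₂ => ⟨hT h₁.1 h₂.1, sup_le h₁.2.1 h₂.2.1, sup_le h₁.2.2 h₂.2.2⟩)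
    ⟨⊥, hbot, bot_le, bot_le⟩

/-- The meet of `x` and `y` is the greatest common lower bound in `T`, not their meet in `α`. -/
noncomputable abbrev SupClosed.latticeOfNoetherian (hN : NoetherianOrd α) {T : Set α}
    (hT : SupClosed T) (hbot : ⊥ ∈ T) : Lattice T :=
  let glb (x y : T) := Classical.choose (hN.exists_isGreatest_lowerBound_mem hT hbot x y)
  have isGreatest_glb (x y : T) :=
    Classical.choose_spec (hN.exists_isGreatest_lowerBound_mem hT hbot x y)
  { Subtype.semilatticeSup fun _ _ hx hy => hT hx hy with
    inf := fun x y => ⟨glb x y, (isGreatest_glb x y).1.1⟩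
    inf_le_left := fun x y => (isGreatest_glb x y).1.2.1
    inf_le_right := fun x y => (isGreatest_glb x y).1.2.2
    le_inf := fun t x y htx hty => (isGreatest_glb x y).2 ⟨t.2, htx, hty⟩ }

end Noetherian

section AtomGenerated

variable {L T : Type*} [Lattice L] [OrderBot L] [Lattice T] [OrderBot T]

theorem IsBiatomicLat.le_or_exists_isAtom_le_sup (hB : IsBiatomicLat L) {q x w : L}
    (hq : IsAtom q) (h : q ≤ x ⊔ w) : q ≤ x ∨ ∃ r, IsAtom r ∧ r ≤ w ∧ q ≤ x ⊔ r := by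
  rcases eq_or_ne x ⊥ with rfl | hx
  · exact .inr ⟨q, hq, by simpa using h, le_sup_right⟩
  rcases eq_or_ne w ⊥ with rfl | hw
  · exact .inl (by simpa using h)
  obtain ⟨_, r, -, hx₁, hr, hrw, hq₁⟩ := hB.2 q x w hq hx hw h
  exact .inr ⟨r, hr, hrw, hq₁.trans (sup_le_sup_right hx₁ r)⟩

theorem OrderEmbedding.isAtom_of_isAtom_apply (f : T ↪o L) (hbot : f ⊥ = ⊥) {p : T}
    (hp : IsAtom (f p)) : IsAtom p :=
  ⟨fun h => hp.1 (h ▸ hbot), fun _ hb => f.injective ((hp.2 _ (f.strictMono hb)).trans hbot.symm)⟩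

structure IsAtomGeneratedSubsemilattice (f : T ↪o L) : Prop where
  map_sup : ∀ x y, f (x ⊔ y) = f x ⊔ f y
  map_bot : f ⊥ = ⊥
  exists_finset_isAtom_sup_eq : ∀ x, ∃ F : Finset L, (∀ q ∈ F, IsAtom q) ∧ f x = F.sup id
  mem_range_of_isAtom_le : ∀ x q, IsAtom q → q ≤ f x → q ∈ Set.range f

namespace IsAtomGeneratedSubsemilattice

variable {f : T ↪o L}

theorem exists_finset_sup_eq (hf : IsAtomGeneratedSubsemilattice f) (x : T) :
    ∃ G : Finset T, (∀ p ∈ G, IsAtom (f p)) ∧ x = G.sup id := by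
  classical
  obtain ⟨F, hF, hx⟩ := hf.exists_finset_isAtom_sup_eq x
  have hFrange : ↑F ⊆ f '' Set.univ := fun q hq => by
    rw [Set.image_univ]
    exact hf.mem_range_of_isAtom_le x q (hF q hq) (hx ▸ Finset.le_sup (f := id) hq)
  obtain ⟨G, -, rfl⟩ := Finset.subset_set_image_iff.1 hFrange
  refine ⟨G, fun p hp => hF _ (Finset.mem_image_of_mem f hp), f.injective ?_⟩
  rw [hx, Finset.apply_sup_eq_sup_comp f hf.map_sup hf.map_bot, Finset.sup_image]
  rfl

theorem exists_isAtom_le (hf : IsAtomGeneratedSubsemilattice f) {x : T} (hx : x ≠ ⊥) :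
    ∃ p, IsAtom (f p) ∧ p ≤ x := by
  obtain ⟨G, hG, rfl⟩ := hf.exists_finset_sup_eq x
  rcases G.eq_empty_or_nonempty with rfl | ⟨p, hp⟩
  · exact absurd Finset.sup_empty hx
  exact ⟨p, hG p hp, Finset.le_sup (f := id) hp⟩

theorem isAtom_apply_iff (hf : IsAtomGeneratedSubsemilattice f) {p : T} :
    IsAtom (f p) ↔ IsAtom p := by
  refine ⟨f.isAtom_of_isAtom_apply hf.map_bot, fun hp => ?_⟩
  obtain ⟨q, hq, hqp⟩ := hf.exists_isAtom_le hp.1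
  have hq_ne_bot : q ≠ ⊥ := (f.isAtom_of_isAtom_apply hf.map_bot hq).1
  rwa [← (hp.le_iff.1 hqp).resolve_left hq_ne_bot]

theorem atomisticLat (hf : IsAtomGeneratedSubsemilattice f) : AtomisticLat T := by
  intro x
  obtain ⟨G, hG, rfl⟩ := hf.exists_finset_sup_eq x
  exact ⟨G, fun p hp => hf.isAtom_apply_iff.1 (hG p hp), Finset.isLUB_sup_id⟩

theorem map_ne_bot (hf : IsAtomGeneratedSubsemilattice f) {x : T} (hx : x ≠ ⊥) : f x ≠ ⊥ :=
  fun h => hx (f.injective (h.trans hf.map_bot.symm))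

theorem isBiatomicLat (hf : IsAtomGeneratedSubsemilattice f) (hB : IsBiatomicLat L) :
    IsBiatomicLat T := by
  refine ⟨fun x hx => ?_, fun p x y hp hx hy hpxy => ?_⟩
  · obtain ⟨p, hp, hpx⟩ := hf.exists_isAtom_le hx
    exact ⟨p, hf.isAtom_apply_iff.1 hp, hpx⟩
  have hfp : f p ≤ f x ⊔ f y := hf.map_sup x y ▸ f.monotone hpxy
  obtain ⟨_, _, hx₁, hx₁x, hy₁, hy₁y, hp₁⟩ :=
    hB.2 _ _ _ (hf.isAtom_apply_iff.2 hp) (hf.map_ne_bot hx) (hf.map_ne_bot hy) hfp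
  obtain ⟨x₁, rfl⟩ := hf.mem_range_of_isAtom_le x _ hx₁ hx₁x
  obtain ⟨y₁, rfl⟩ := hf.mem_range_of_isAtom_le y _ hy₁ hy₁y
  refine ⟨x₁, y₁, hf.isAtom_apply_iff.1 hx₁, f.le_iff_le.1 hx₁x, hf.isAtom_apply_iff.1 hy₁,
    f.le_iff_le.1 hy₁y, ?_⟩
  rwa [← f.le_iff_le, hf.map_sup]

theorem joinSemidistributive (hf : IsAtomGeneratedSubsemilattice f) (hB : IsBiatomicLat L)
    (hSD : JoinSemidistributive L) : JoinSemidistributive T := by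
  intro x y z hxyz
  have hL : f x ⊔ f y = f x ⊔ (f y ⊓ f z) :=
    hSD _ _ _ (by rw [← hf.map_sup, ← hf.map_sup, hxyz])
  refine le_antisymm (sup_le le_sup_left ?_) (sup_le_sup_left inf_le_left x)
  obtain ⟨G, hG, rfl⟩ := hf.exists_finset_sup_eq y
  refine Finset.sup_le fun q hq => ?_
  have hqL : f q ≤ f x ⊔ (f (G.sup id) ⊓ f z) :=
    (f.monotone (Finset.le_sup (f := id) hq)).trans (le_sup_right.trans hL.le)
  rcases hB.le_or_exists_isAtom_le_sup (hG q hq) hqL with hqx | ⟨_, hr, hryz, hqr⟩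
  · exact (f.le_iff_le.1 hqx).trans le_sup_left
  obtain ⟨r, rfl⟩ := hf.mem_range_of_isAtom_le _ _ hr (hryz.trans inf_le_left)
  have hr_le_inf : r ≤ G.sup id ⊓ z :=
    le_inf (f.le_iff_le.1 (hryz.trans inf_le_left)) (f.le_iff_le.1 (hryz.trans inf_le_right))
  rw [← hf.map_sup, f.le_iff_le] at hqr
  exact hqr.trans (sup_le_sup_left hr_le_inf x)

end IsAtomGeneratedSubsemilattice

end AtomGenerated

section FinsetSups

variable {L : Type*} [Lattice L] [OrderBot L] {S : Set L}

def finsetSups (S : Set L) : Set L := {x | ∃ F : Finset L, ↑F ⊆ S ∧ x = F.sup id}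

theorem supClosed_finsetSups (S : Set L) : SupClosed (finsetSups S) := by
  classical
  rintro _ ⟨F, hF, rfl⟩ _ ⟨G, hG, rfl⟩
  exact ⟨F ∪ G, by simpa using And.intro hF hG, Finset.sup_union.symm⟩

theorem bot_mem_finsetSups : ⊥ ∈ finsetSups S := ⟨∅, by simp, rfl⟩

theorem mem_finsetSups_of_mem {p : L} (hp : p ∈ S) : p ∈ finsetSups S :=
  ⟨{p}, by simpa using hp, by simp⟩

theorem finsetSups_subset_Iic {a : L} (hS : S ⊆ Set.Iic a) : finsetSups S ⊆ Set.Iic a := by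
  rintro _ ⟨F, hF, rfl⟩
  exact Finset.sup_le fun q hq => hS (hF hq)

end FinsetSups

/-- for a noetherian, biatomic, join-semidistributive lattice `L`
with zero and `a ∈ L`, with `S` the set of atoms below `a`, the subposet `T`
of all joins of finite subsets of `S` is a noetherian, biatomic,
join-semidistributive, atomistic lattice whose atoms are exactly the elements
of `S`.  The subposet `T` is presented as a type `T'` together with an order
embedding `e` of `T'` onto `T ⊆ L`. -/
theorem stmt_5 (L : Type) [Lattice L] [OrderBot L]
    (hN : NoetherianOrd L) (hB : IsBiatomicLat L) (hSD : JoinSemidistributive L)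
    (a : L) (S : Set L) (hS : S = {p : L | IsAtom p ∧ p ≤ a})
    (T : Set L) (hT : T = {x : L | ∃ F : Finset L, ↑F ⊆ S ∧ x = F.sup id}) :
    ∃ (T' : Type) (_ : Lattice T') (_ : OrderBot T') (e : T' → L),
      (∀ x y : T', e x ≤ e y ↔ x ≤ y) ∧
      Set.range e = T ∧
      NoetherianOrd T' ∧ IsBiatomicLat T' ∧ JoinSemidistributive T' ∧
      AtomisticLat T' ∧
      (∀ p : T', IsAtom p ↔ e p ∈ S) := by
  obtain rfl : T = finsetSups S := hT
  have hle_a : finsetSups S ⊆ Set.Iic a := finsetSups_subset_Iic (hS ▸ fun _ hp => hp.2)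
  let _ := (supClosed_finsetSups S).latticeOfNoetherian hN bot_mem_finsetSups
  let _ := Subtype.orderBot (bot_mem_finsetSups (S := S))
  let f : finsetSups S ↪o L := OrderEmbedding.subtype _
  have hf : IsAtomGeneratedSubsemilattice f :=
    { map_sup := fun _ _ => rfl
      map_bot := rfl
      exists_finset_isAtom_sup_eq := fun ⟨_, F, hF, hx⟩ => ⟨F, fun q hq => (hS ▸ hF hq).1, hx⟩
      mem_range_of_isAtom_le := fun x q hq hqx =>
        ⟨⟨q, mem_finsetSups_of_mem (hS ▸ ⟨hq, hqx.trans (hle_a x.2)⟩)⟩, rfl⟩ }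
  refine ⟨finsetSups S, _, _, f, fun _ _ => f.le_iff_le, Subtype.range_coe,
    hN.of_strictMono f.strictMono, hf.isBiatomicLat hB, hf.joinSemidistributive hB hSD,
    hf.atomisticLat, fun p => ?_⟩
  rw [← hf.isAtom_apply_iff, Set.ext_iff.1 hS (f p)]
  exact ⟨fun hp => ⟨hp, hle_a p.2⟩, And.left⟩
end

section
/- Let L be a lattice. If there is a lattice embedding of L into some finite, join-semidistributive, biatomic lattice M such that the atoms of M separate the elements of L (i.e., for all x, y ∈ L with x ≰ y there is an atom p of M with p ≤ x and p ≰ y), then there is a lattice embedding of L into some finite, join-semidistributive, biatomic, atomistic lattice. -/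
/-!
Let `a(x)` be the join of the atoms below `x` in the finite lattice `M`. This is an interior
operator, so its fixed points, the joins of atoms, form a lattice `N` with the join of `M` and
meet `a(x ⊓ y)`; `N` is atomistic and has the same atoms as `M`. Biatomicity of `M` makes `a`
preserve joins; hence `x ↦ a(f x)` is again a lattice homomorphism, and `N`
inherits biatomicity and join-semidistributivity from `M`. The homomorphism is injective because
the atoms of `M` separate the image of `L`.
-/

theorem AtomisticLat.exists_isAtom_le {L : Type*} [Lattice L] [OrderBot L] (h : AtomisticLat L)
    {x : L} (hx : x ≠ ⊥) : ∃ p, IsAtom p ∧ p ≤ x := by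
  obtain ⟨s, hs, hlub⟩ := h x
  rcases s.eq_empty_or_nonempty with rfl | ⟨p, hp⟩
  · exact (hx (le_bot_iff.1 (isLUB_empty_iff.1 hlub ⊥))).elim
  · exact ⟨p, hs p hp, hlub.1 hp⟩

section AtomJoin

variable {M : Type*} [Lattice M] [OrderBot M] [Fintype M] {p x y : M}

open Classical in
noncomputable def atomJoin (x : M) : M :=
  (Finset.univ.filter fun p => IsAtom p ∧ p ≤ x).sup id

theorem atomJoin_le_iff : atomJoin x ≤ y ↔ ∀ p : M, IsAtom p → p ≤ x → p ≤ y := by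
  classical
  simp [atomJoin, Finset.sup_le_iff, and_imp]

theorem atomJoin_le (x : M) : atomJoin x ≤ x :=
  atomJoin_le_iff.2 fun _ _ => id

theorem IsAtom.le_atomJoin_iff (hp : IsAtom p) : p ≤ atomJoin x ↔ p ≤ x := by
  classical
  refine ⟨fun h => h.trans (atomJoin_le x), fun h => ?_⟩
  exact Finset.le_sup (f := id) (by simp [hp, h])

theorem atomJoin_mono : Monotone (atomJoin : M → M) := fun _ _ hxy =>
  atomJoin_le_iff.2 fun _ hp hpx => hp.le_atomJoin_iff.2 (hpx.trans hxy)

theorem atomJoin_atomJoin (x : M) : atomJoin (atomJoin x) = atomJoin x :=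
  le_antisymm (atomJoin_le _) (atomJoin_le_iff.2 fun _ hp hpx =>
    hp.le_atomJoin_iff.2 (hp.le_atomJoin_iff.2 hpx))

theorem atomJoin_bot : atomJoin (⊥ : M) = ⊥ :=
  le_bot_iff.1 (atomJoin_le ⊥)

theorem IsAtom.atomJoin_eq (hp : IsAtom p) : atomJoin p = p :=
  le_antisymm (atomJoin_le p) (hp.le_atomJoin_iff.2 le_rfl)

theorem atomJoin_sup (hM : IsBiatomicLat M) (x y : M) :
    atomJoin (x ⊔ y) = atomJoin x ⊔ atomJoin y := by
  refine le_antisymm (atomJoin_le_iff.2 fun p hp hpxy => ?_) (atomJoin_mono.le_map_sup x y)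
  rcases eq_or_ne x ⊥ with rfl | hx
  · exact le_sup_of_le_right (hp.le_atomJoin_iff.2 (by simpa using hpxy))
  rcases eq_or_ne y ⊥ with rfl | hy
  · exact le_sup_of_le_left (hp.le_atomJoin_iff.2 (by simpa using hpxy))
  obtain ⟨u, v, hu, hux, hv, hvy, hpuv⟩ := hM.2 p x y hp hx hy hpxy
  exact hpuv.trans (sup_le_sup (hu.le_atomJoin_iff.2 hux) (hv.le_atomJoin_iff.2 hvy))

end AtomJoin

abbrev JoinOfAtoms (M : Type*) [Lattice M] [OrderBot M] [Fintype M] : Type _ :=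
  {x : M // atomJoin x = x}

namespace JoinOfAtoms

variable {M : Type*} [Lattice M] [OrderBot M] [Fintype M]

noncomputable def ofElem (x : M) : JoinOfAtoms M :=
  ⟨atomJoin x, atomJoin_atomJoin x⟩

noncomputable def gci : GaloisCoinsertion ((↑) : JoinOfAtoms M → M) ofElem where
  choice x hx := ⟨x, le_antisymm (atomJoin_le x) hx⟩
  gc a x := ⟨fun h => (a.2.symm.le.trans (atomJoin_mono h) : (a : M) ≤ atomJoin x),
    fun h => le_trans (α := M) h (atomJoin_le x)⟩
  u_l_le a := a.2.le
  choice_eq x hx := Subtype.ext (le_antisymm (atomJoin_le x) hx).symm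

noncomputable instance : Lattice (JoinOfAtoms M) := gci.liftLattice

instance : OrderBot (JoinOfAtoms M) := Subtype.orderBot atomJoin_bot

theorem coe_ne_bot {a : JoinOfAtoms M} (ha : a ≠ ⊥) : (a : M) ≠ ⊥ :=
  fun h => ha (Subtype.ext h)

theorem ofElem_le_ofElem_iff {x y : M} :
    ofElem x ≤ ofElem y ↔ ∀ p : M, IsAtom p → p ≤ x → p ≤ y := by
  change atomJoin x ≤ atomJoin y ↔ _
  simp only [atomJoin_le_iff]
  exact forall₃_congr fun p hp _ => hp.le_atomJoin_iff

theorem ofElem_inf (x y : M) : ofElem (x ⊓ y) = ofElem x ⊓ ofElem y :=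
  gci.gc.u_inf

theorem ofElem_sup (hM : IsBiatomicLat M) (x y : M) : ofElem (x ⊔ y) = ofElem x ⊔ ofElem y :=
  Subtype.ext (atomJoin_sup hM x y)

theorem isAtom_of_isAtom_coe {a : JoinOfAtoms M} (ha : IsAtom (a : M)) : IsAtom a :=
  ⟨fun h => ha.1 (congrArg Subtype.val h), fun b hb => Subtype.ext (ha.2 b hb)⟩

theorem isAtom_mk {p : M} (hp : IsAtom p) : IsAtom (⟨p, hp.atomJoin_eq⟩ : JoinOfAtoms M) :=
  isAtom_of_isAtom_coe hp

theorem isAtom_coe_iff {a : JoinOfAtoms M} : IsAtom (a : M) ↔ IsAtom a := by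
  refine ⟨isAtom_of_isAtom_coe, fun ha => ?_⟩
  obtain ⟨p, hp, hpa⟩ : ∃ p : M, IsAtom p ∧ p ≤ a := by
    by_contra! h
    have : atomJoin (a : M) ≤ ⊥ := atomJoin_le_iff.2 fun p hp hpa => (h p hp hpa).elim
    exact coe_ne_bot ha.1 (le_bot_iff.1 (a.2 ▸ this))
  rwa [← (ha.le_iff_eq (isAtom_mk hp).1).1 hpa]

theorem atomisticLat : AtomisticLat (JoinOfAtoms M) := by
  intro x
  refine ⟨{q | IsAtom q ∧ q ≤ x}, fun q hq => hq.1, fun q hq => hq.2, fun u hu => ?_⟩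
  change (x : M) ≤ u
  rw [← x.2, atomJoin_le_iff]
  exact fun p hp hpx => hu ⟨isAtom_mk hp, hpx⟩

theorem isBiatomicLat (hM : IsBiatomicLat M) : IsBiatomicLat (JoinOfAtoms M) := by
  refine ⟨fun x hx => atomisticLat.exists_isAtom_le hx, fun p a b hp ha hb hpab => ?_⟩
  obtain ⟨x, y, hx, hxa, hy, hyb, hpxy⟩ :=
    hM.2 p a b (isAtom_coe_iff.2 hp) (coe_ne_bot ha) (coe_ne_bot hb) hpab
  exact ⟨_, _, isAtom_mk hx, hxa, isAtom_mk hy, hyb, hpxy⟩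

theorem joinSemidistributive (hM : IsBiatomicLat M) (hjsd : JoinSemidistributive M) :
    JoinSemidistributive (JoinOfAtoms M) := by
  intro x y z hxyz
  have h : (x : M) ⊔ y = (x : M) ⊔ ((y : M) ⊓ (z : M)) := hjsd x y z (congrArg Subtype.val hxyz)
  apply Subtype.ext
  calc (x : M) ⊔ y = atomJoin ((x : M) ⊔ y) := by rw [atomJoin_sup hM, x.2, y.2]
    _ = atomJoin ((x : M) ⊔ ((y : M) ⊓ (z : M))) := by rw [h]
    _ = (x : M) ⊔ atomJoin ((y : M) ⊓ z) := by rw [atomJoin_sup hM, x.2]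

end JoinOfAtoms

theorem stmt_6 (L : Type) [Lattice L]
    (h : ∃ (M : Type) (_ : Lattice M) (_ : Fintype M) (_ : OrderBot M)
      (f : L → M),
        Function.Injective f ∧
        (∀ x y : L, f (x ⊔ y) = f x ⊔ f y) ∧
        (∀ x y : L, f (x ⊓ y) = f x ⊓ f y) ∧
        JoinSemidistributive M ∧ IsBiatomicLat M ∧
        (∀ x y : L, ¬ x ≤ y → ∃ p : M, IsAtom p ∧ p ≤ f x ∧ ¬ p ≤ f y)) :
    ∃ (M : Type) (_ : Lattice M) (_ : Fintype M) (_ : OrderBot M)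
      (f : L → M),
        Function.Injective f ∧
        (∀ x y : L, f (x ⊔ y) = f x ⊔ f y) ∧
        (∀ x y : L, f (x ⊓ y) = f x ⊓ f y) ∧
        JoinSemidistributive M ∧ IsBiatomicLat M ∧ AtomisticLat M := by
  obtain ⟨M, _, _, _, f, -, hsup, hinf, hjsd, hbi, hsep⟩ := h
  have reflect : ∀ a b, JoinOfAtoms.ofElem (f a) ≤ JoinOfAtoms.ofElem (f b) → a ≤ b :=
    fun a b hab => by
      by_contra hn
      obtain ⟨p, hp, hpa, hpb⟩ := hsep a b hn
      exact hpb (JoinOfAtoms.ofElem_le_ofElem_iff.1 hab p hp hpa)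
  refine ⟨JoinOfAtoms M, inferInstance, Fintype.ofFinite _, inferInstance,
    JoinOfAtoms.ofElem ∘ f, fun a b hab => le_antisymm (reflect a b hab.le) (reflect b a hab.ge),
    fun x y => ?_, fun x y => ?_, JoinOfAtoms.joinSemidistributive hbi hjsd,
    JoinOfAtoms.isBiatomicLat hbi, JoinOfAtoms.atomisticLat⟩
  · simp only [Function.comp_apply, hsup, JoinOfAtoms.ofElem_sup hbi]
  · simp only [Function.comp_apply, hinf, JoinOfAtoms.ofElem_inf]
end

section
/- Let L be a finite atomistic lattice and let (a; M) be an extension pair of L, i.e., a ∈ L is neither 0 nor an atom, and M is a meet-subsemilattice of L containing {0} ∪ [a,1]. Put L_a = L \ [a,1] and L(a;M) = (L_a × {0}) ∪ (M × {1}), ordered componentwise inside L × 2. Then L(a;M) is a finite atomistic lattice, the map j : L → L(a;M) sending x to the least element of L(a;M) above (x,0) is an embedding preserving join, meet, 0, 1 and atoms, and the atoms of L(a;M) are exactly the pairs (p,0) for p an atom of L, together with (0,1). -/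
/-- `(a; M)` is an extension pair of `L`: `a` is neither `⊥` nor an atom, and
`M` is a meet-subsemilattice of `L` containing `⊥` and the interval `[a, ⊤]`. -/
def ExtensionPair (L : Type*) [Lattice L] [BoundedOrder L]
    (a : L) (M : Set L) : Prop :=
  a ≠ ⊥ ∧ ¬ IsAtom a ∧ (∀ x ∈ M, ∀ y ∈ M, x ⊓ y ∈ M) ∧
    (⊥ : L) ∈ M ∧ ∀ x : L, a ≤ x → x ∈ M

/-- The underlying set of `L(a;M) = (L_a × {0}) ∪ (M × {1}) ⊆ L × 2`, where
`L_a = L \ [a, ⊤]` and `2 = {0 < 1}` is modelled by `Bool`. -/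
def LaMSet (L : Type*) [Lattice L] [BoundedOrder L]
    (a : L) (M : Set L) : Set (L × Bool) :=
  {p | (p.2 = false ∧ ¬ a ≤ p.1) ∨ (p.2 = true ∧ p.1 ∈ M)}

noncomputable abbrev SemilatticeInf.toLatticeOfFinite (α : Type*) [SemilatticeInf α] [OrderTop α]
    [Finite α] : Lattice α where
  __ := ‹SemilatticeInf α›
  sup x y := (Set.toFinite {z | x ≤ z ∧ y ≤ z}).toFinset.inf id
  le_sup_left _ _ := Finset.le_inf fun _ hz => ((Set.Finite.mem_toFinset _).1 hz).1
  le_sup_right _ _ := Finset.le_inf fun _ hz => ((Set.Finite.mem_toFinset _).1 hz).2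
  sup_le _ _ _ hx hy := Finset.inf_le ((Set.Finite.mem_toFinset _).2 ⟨hx, hy⟩)

lemma not_le_of_isAtom {α : Type*} [PartialOrder α] [OrderBot α] {a x : α} (ha : a ≠ ⊥)
    (ha' : ¬ IsAtom a) (hx : IsAtom x) : ¬ a ≤ x := fun hax =>
  (hx.le_iff.1 hax).elim ha fun hax => ha' (hax ▸ hx)

lemma atomisticLat_iff_isAtomistic {L : Type*} [Lattice L] [OrderBot L] :
    AtomisticLat L ↔ IsAtomistic L := by
  simp only [AtomisticLat, isAtomistic_iff, and_comm]

namespace LaMSet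

variable {L : Type*} [Lattice L] [BoundedOrder L] {a : L} {M : Set L}

@[simp] lemma mk_false_mem {x : L} : (x, false) ∈ LaMSet L a M ↔ ¬ a ≤ x := by simp [LaMSet]

@[simp] lemma mk_true_mem {x : L} : (x, true) ∈ LaMSet L a M ↔ x ∈ M := by simp [LaMSet]

lemma infClosed (hM : ∀ x ∈ M, ∀ y ∈ M, x ⊓ y ∈ M) : InfClosed (LaMSet L a M) := by
  rintro ⟨x, _ | _⟩ hx ⟨y, _ | _⟩ hy <;> simp_all [le_inf_iff]

lemma top_mem (hM : ∀ x, a ≤ x → x ∈ M) : (⊤ : L × Bool) ∈ LaMSet L a M :=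
  mk_true_mem.2 (hM ⊤ le_top)

lemma bot_mem (ha : a ≠ ⊥) : (⊥ : L × Bool) ∈ LaMSet L a M :=
  mk_false_mem.2 fun h => ha (le_bot_iff.1 h)

lemma snd_eq_true_of_le {p : L × Bool} (hp : p ∈ LaMSet L a M) (h : a ≤ p.1) : p.2 = true := by
  rcases hp with ⟨-, hp⟩ | ⟨hp, -⟩
  exacts [absurd h hp, hp]

variable [hM : Fact (ExtensionPair L a M)]

noncomputable instance : SemilatticeInf (LaMSet L a M) :=
  Subtype.semilatticeInf fun _ _ hx hy => infClosed hM.out.2.2.1 hx hy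

noncomputable instance : BoundedOrder (LaMSet L a M) :=
  Subtype.boundedOrder (bot_mem hM.out.1) (top_mem hM.out.2.2.2.2)

noncomputable instance [Finite L] : Lattice (LaMSet L a M) :=
  SemilatticeInf.toLatticeOfFinite _

open Classical in
noncomputable def embed (x : L) : LaMSet L a M :=
  ⟨(x, decide (a ≤ x)), by
    by_cases hx : a ≤ x
    · simp [hx, hM.out.2.2.2.2 x hx]
    · simp [hx]⟩

lemma fst_embed (x : L) : ((embed x : LaMSet L a M) : L × Bool).1 = x := rfl

lemma gc_embed : GaloisConnection (embed : L → LaMSet L a M) fun p => (p : L × Bool).1 := by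
  rintro x ⟨⟨y, c⟩, hp⟩
  refine ⟨And.left, fun hxy => ⟨hxy, ?_⟩⟩
  by_cases hx : a ≤ x
  · obtain rfl : c = true := snd_eq_true_of_le hp (hx.trans hxy)
    exact le_top
  · simp [embed, hx]

@[simp] lemma coe_bot : ((⊥ : LaMSet L a M) : L × Bool) = (⊥, false) := rfl

@[simp] lemma coe_top : ((⊤ : LaMSet L a M) : L × Bool) = (⊤, true) := rfl

lemma isAtom_mk_false {x : L} (hx : ¬ a ≤ x) :
    IsAtom (⟨(x, false), mk_false_mem.2 hx⟩ : LaMSet L a M) ↔ IsAtom x := by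
  simp only [IsAtom, ne_eq, ← Subtype.coe_inj, coe_bot, Prod.mk.injEq, and_true]
  refine and_congr_right fun _ => ⟨fun h y hy => ?_, ?_⟩
  · exact (Prod.mk.inj (h ⟨(y, false), mk_false_mem.2 fun hay => hx (hay.trans hy.le)⟩
      (Prod.mk_lt_mk_iff_left.2 hy))).1
  · rintro h ⟨⟨y, c⟩, hp⟩ hlt
    obtain rfl : c = false := le_bot_iff.1 hlt.le.2
    simpa using h y (Prod.mk_lt_mk_iff_left.1 hlt)

lemma isAtom_mk_true {x : L} (hx : x ∈ M) :
    IsAtom (⟨(x, true), mk_true_mem.2 hx⟩ : LaMSet L a M) ↔ x = ⊥ := by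
  constructor
  · intro h
    have hbot : ((⊥, true) : L × Bool) ∈ LaMSet L a M := mk_true_mem.2 hM.out.2.2.2.1
    have : (⟨(⊥, true), hbot⟩ : LaMSet L a M) = ⟨(x, true), mk_true_mem.2 hx⟩ :=
      (h.le_iff_eq (by simp [← Subtype.coe_inj])).1 ⟨bot_le, le_rfl⟩
    simpa [eq_comm] using this
  · rintro rfl
    refine ⟨fun h => by simp [← Subtype.coe_inj, coe_bot] at h, ?_⟩
    rintro ⟨⟨y, c⟩, hp⟩ hlt
    obtain rfl : y = ⊥ := le_bot_iff.1 hlt.le.1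
    cases c
    · rfl
    · exact absurd rfl hlt.ne

lemma isAtom_iff (p : LaMSet L a M) :
    IsAtom p ↔ (∃ q, IsAtom q ∧ (p : L × Bool) = (q, false)) ∨ (p : L × Bool) = (⊥, true) := by
  obtain ⟨⟨x, _ | _⟩, hp⟩ := p
  · rw [isAtom_mk_false (mk_false_mem.1 hp)]
    simp
  · rw [isAtom_mk_true (mk_true_mem.1 hp)]
    simp

lemma isAtom_embed_iff (x : L) : IsAtom (embed x : LaMSet L a M) ↔ IsAtom x := by
  by_cases hx : a ≤ x
  · have hx0 : x ≠ ⊥ := fun h => hM.out.1 (le_bot_iff.1 (h ▸ hx))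
    simpa [isAtom_iff, embed, hx, hx0] using fun h => not_le_of_isAtom hM.out.1 hM.out.2.1 h hx
  · simp [isAtom_iff, embed, hx]

instance isAtomistic [IsAtomistic L] : IsAtomistic (LaMSet L a M) where
  isLUB_atoms p := by
    refine ⟨{q | IsAtom q ∧ q ≤ p}, ⟨fun q hq => hq.2, fun u hu => ?_⟩, fun _ hq => hq.1⟩
    obtain ⟨⟨x, b⟩, hp⟩ := p
    refine ⟨le_iff_atom_le_imp.2 fun c hc hcx => ?_, ?_⟩
    · exact (gc_embed _ _).1 (hu ⟨(isAtom_embed_iff c).2 hc, (gc_embed _ _).2 hcx⟩)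
    · cases b
      · exact Bool.false_le _
      · exact (hu ⟨(isAtom_mk_true hM.out.2.2.2.1).2 rfl, bot_le, le_rfl⟩).2

lemma embed_injective : Function.Injective (embed : L → LaMSet L a M) :=
  Function.LeftInverse.injective (g := fun p : LaMSet L a M => (p : L × Bool).1) fst_embed

lemma isLeast_embed (x : L) :
    IsLeast {p : LaMSet L a M | (x, false) ≤ (p : L × Bool)} (embed x) :=
  ⟨⟨le_rfl, Bool.false_le _⟩, fun _ hp => (gc_embed _ _).2 hp.1⟩

lemma embed_sup [Finite L] (x y : L) : (embed (x ⊔ y) : LaMSet L a M) = embed x ⊔ embed y :=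
  gc_embed.l_sup

open Classical in
lemma embed_inf (x y : L) : (embed (x ⊓ y) : LaMSet L a M) = embed x ⊓ embed y :=
  Subtype.ext <| Prod.ext rfl <| by
    change decide (a ≤ x ⊓ y) = decide (a ≤ x) ⊓ decide (a ≤ y)
    simp

lemma embed_bot : (embed ⊥ : LaMSet L a M) = ⊥ :=
  gc_embed.l_bot

lemma embed_top : (embed ⊤ : LaMSet L a M) = ⊤ :=
  Subtype.ext <| Prod.ext rfl <| by simp [embed]

end LaMSet

/-- `L(a;M)` (presented as a type `K` order-isomorphic to the
subposet `LaMSet L a M` of `L × 2`) is a finite atomistic lattice, the map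
`j` sending `x` to the least element above `(x, 0)` is a
`⟨∨,∧,0,1,at⟩`-embedding, and the atoms of `L(a;M)` are the `(p,0)` for `p`
an atom of `L`, together with `(⊥,1)`. -/
theorem stmt_8 (L : Type) [Lattice L] [Fintype L] [BoundedOrder L]
    (hA : AtomisticLat L) (a : L) (M : Set L) (h : ExtensionPair L a M) :
    ∃ (K : Type) (_ : Lattice K) (_ : Fintype K) (_ : BoundedOrder K)
      (e : K → L × Bool),
      Function.Injective e ∧
      Set.range e = LaMSet L a M ∧
      (∀ x y : K, x ≤ y ↔ e x ≤ e y) ∧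
      AtomisticLat K ∧
      ∃ j : L → K,
        (∀ x : L, IsLeast {z : K | ((x, false) : L × Bool) ≤ e z} (j x)) ∧
        Function.Injective j ∧
        (∀ x y : L, j (x ⊔ y) = j x ⊔ j y) ∧
        (∀ x y : L, j (x ⊓ y) = j x ⊓ j y) ∧
        j ⊥ = ⊥ ∧ j ⊤ = ⊤ ∧
        (∀ x : L, IsAtom (j x) ↔ IsAtom x) ∧
        (∀ p : K, IsAtom p ↔
          ((∃ q : L, IsAtom q ∧ e p = (q, false)) ∨ e p = ((⊥ : L), true))) := by
  have : Fact (ExtensionPair L a M) := ⟨h⟩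
  have := atomisticLat_iff_isAtomistic.1 hA
  exact ⟨LaMSet L a M, inferInstance, Fintype.ofFinite _, inferInstance, Subtype.val,
    Subtype.val_injective, Subtype.range_coe, fun _ _ => Iff.rfl,
    atomisticLat_iff_isAtomistic.2 inferInstance, LaMSet.embed, LaMSet.isLeast_embed,
    LaMSet.embed_injective, LaMSet.embed_sup, LaMSet.embed_inf, LaMSet.embed_bot,
    LaMSet.embed_top, LaMSet.isAtom_embed_iff, LaMSet.isAtom_iff⟩
end

section
/- Let L be a finite, atomistic, join-semidistributive lattice, let (a;M) be an extension pair of L with associated closure operator f (f(x) = least element of M above x). Then L(a;M) is join-semidistributive if and only if (i) every maximal element of L \ [a,1] belongs to M, and (ii) for all x ∈ L and all distinct atoms u, v of L, f(x ∨ u) = f(x ∨ v) implies u ≤ f(x). -/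
theorem JoinSemidistributive.sup_eq_left_of_inf_le {K : Type*} [Lattice K]
    (hK : JoinSemidistributive K) {x y z : K} (h : x ⊔ y = x ⊔ z) (hyz : y ⊓ z ≤ x) :
    x ⊔ y = x :=
  (hK x y z h).trans (sup_eq_left.mpr hyz)

/- Were `x ⊔ y ≠ x ⊔ (y ⊓ z)`, take `c` maximal in `[x ⊔ (y ⊓ z), x ⊔ y)`. Elements `s ≤ y` and
`t ≤ z` of `S` outside `c` are distinct, and maximality gives `c ⊔ s = c ⊔ t = x ⊔ y > c`. -/
theorem JoinSemidistributive.of_dense {K : Type*} [Lattice K] [Finite K] (S : Set K)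
    (hS : ∀ y w : K, ¬ y ≤ w → ∃ s ∈ S, s ≤ y ∧ ¬ s ≤ w)
    (hsup : ∀ p, ∀ s ∈ S, ∀ t ∈ S, s ≠ t → p ⊔ s = p ⊔ t → p ⊔ s = p) :
    JoinSemidistributive K := by
  intro x y z hyz
  by_contra hne
  obtain ⟨c, hwc, hc⟩ := Finite.exists_le_maximal (p := fun t => x ⊔ y ⊓ z ≤ t ∧ t < x ⊔ y)
    ⟨le_rfl, (sup_le_sup_left inf_le_left x).lt_of_ne (Ne.symm hne)⟩
  have hcd : c < x ⊔ y := hc.prop.2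
  have hxc : x ≤ c := le_sup_left.trans hwc
  have hsup_c : ∀ t ≤ x ⊔ y, ¬ t ≤ c → c ⊔ t = x ⊔ y := by
    intro t htd htc
    by_contra hne'
    exact htc (le_sup_right.trans
      (hc.2 ⟨hwc.trans le_sup_left, (sup_le hcd.le htd).lt_of_ne hne'⟩ le_sup_left))
  obtain ⟨s, hs, hsy, hsc⟩ := hS y c fun h => hcd.not_ge (sup_le hxc h)
  obtain ⟨t, ht, htz, htc⟩ := hS z c fun h => hcd.not_ge (hyz ▸ sup_le hxc h)
  have hst : s ≠ t := by
    rintro rfl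
    exact hsc ((le_inf hsy htz).trans (le_sup_right.trans hwc))
  have hcs := hsup_c s (hsy.trans le_sup_right) hsc
  have hct := hsup_c t (htz.trans (hyz ▸ le_sup_right)) htc
  exact hcd.ne ((hsup c s hs t ht hst (hcs.trans hct.symm)).symm.trans hcs)

theorem ClosureOperator.not_le_closure {L : Type*} [PartialOrder L] [Finite L] {a : L}
    {c : ClosureOperator L}
    (hmax : ∀ x, ¬ a ≤ x → (∀ y, ¬ a ≤ y → x ≤ y → x = y) → c.IsClosed x) {x : L}
    (hx : ¬ a ≤ x) : ¬ a ≤ c x := by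
  obtain ⟨m, hxm, hm⟩ := Finite.exists_le_maximal (p := fun y => ¬ a ≤ y) hx
  have hcm : c.IsClosed m := hmax m hm.prop fun y hy hmy => (hm.eq_of_ge hy hmy).symm
  exact fun ha => hm.prop (ha.trans (c.closure_min hxm hcm))

section ExtensionLattice

variable {L : Type*} [Lattice L] [BoundedOrder L] {a : L} {c : ClosureOperator L}
  {K : Type*} [Lattice K] {e : K → L × Bool}

theorem AtomisticLat.exists_isAtom_le_not_le (hA : AtomisticLat L) {y w : L} (h : ¬ y ≤ w) :
    ∃ u, IsAtom u ∧ u ≤ y ∧ ¬ u ≤ w := by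
  obtain ⟨s, hs, hlub⟩ := hA y
  by_contra! hc
  exact h (hlub.2 fun p hp => hc p (hs p hp) (hlub.1 hp))

theorem ExtensionPair.not_le_of_isAtom {M : Set L} (h : ExtensionPair L a M) {u : L}
    (hu : IsAtom u) : ¬ a ≤ u :=
  fun hau => (hu.le_iff.mp hau).elim h.1 fun hau => h.2.1 (hau ▸ hu)

def atomsLaM (L : Type*) [Lattice L] [BoundedOrder L] : Set (L × Bool) :=
  insert (⊥, true) {p | IsAtom p.1 ∧ p.2 = false}

/-- `e` identifies the lattice `K` with `L(a;M)`, `M` being the closed elements of `c`. -/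
structure PresentsLaM (a : L) (c : ClosureOperator L) (K : Type*) [Lattice K]
    (e : K → L × Bool) : Prop where
  range_eq : Set.range e = LaMSet L a {x | c.IsClosed x}
  le_iff : ∀ P Q : K, P ≤ Q ↔ e P ≤ e Q

namespace PresentsLaM

theorem injective (hK : PresentsLaM a c K e) : Function.Injective e :=
  fun P Q hPQ => le_antisymm ((hK.le_iff P Q).2 hPQ.le) ((hK.le_iff Q P).2 hPQ.ge)

theorem monotone (hK : PresentsLaM a c K e) {P Q : K} (h : P ≤ Q) : e P ≤ e Q :=
  (hK.le_iff P Q).1 h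

theorem mem (hK : PresentsLaM a c K e) (P : K) : e P ∈ LaMSet L a {x | c.IsClosed x} :=
  hK.range_eq ▸ Set.mem_range_self P

theorem not_le_of_snd_eq_false (hK : PresentsLaM a c K e) {P : K} (hP : (e P).2 = false) :
    ¬ a ≤ (e P).1 := by
  rcases hK.mem P with ⟨-, h⟩ | ⟨h, -⟩
  · exact h
  · simp [hP] at h

theorem isClosed_of_snd_eq_true (hK : PresentsLaM a c K e) {P : K} (hP : (e P).2 = true) :
    c.IsClosed (e P).1 := by
  rcases hK.mem P with ⟨h, -⟩ | ⟨-, h⟩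
  · simp [hP] at h
  · exact h

theorem exists_eq_false (hK : PresentsLaM a c K e) {x : L} (hx : ¬ a ≤ x) :
    ∃ P, e P = (x, false) :=
  (hK.range_eq ▸ Or.inl ⟨rfl, hx⟩ : (x, false) ∈ Set.range e)

theorem exists_eq_true (hK : PresentsLaM a c K e) {x : L} (hx : c.IsClosed x) :
    ∃ P, e P = (x, true) :=
  (hK.range_eq ▸ Or.inr ⟨rfl, hx⟩ : (x, true) ∈ Set.range e)

theorem sup_le_of_mem (hK : PresentsLaM a c K e) {P Q : K} {p : L × Bool}
    (hp : p ∈ LaMSet L a {x | c.IsClosed x}) (hP : e P ≤ p) (hQ : e Q ≤ p) : e (P ⊔ Q) ≤ p := by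
  obtain ⟨R, rfl⟩ : p ∈ Set.range e := hK.range_eq ▸ hp
  exact hK.monotone (sup_le ((hK.le_iff P R).2 hP) ((hK.le_iff Q R).2 hQ))

theorem sup_of_snd_eq_true (hK : PresentsLaM a c K e) {P Q : K} (h : (e (P ⊔ Q)).2 = true) :
    e (P ⊔ Q) = (c ((e P).1 ⊔ (e Q).1), true) := by
  have hP := hK.monotone (le_sup_left : P ≤ P ⊔ Q)
  have hQ := hK.monotone (le_sup_right : Q ≤ P ⊔ Q)
  have hle := hK.sup_le_of_mem (p := (c ((e P).1 ⊔ (e Q).1), true))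
    (Or.inr ⟨rfl, c.isClosed_closure _⟩)
    ⟨le_sup_left.trans (c.le_closure _), Bool.le_true _⟩
    ⟨le_sup_right.trans (c.le_closure _), Bool.le_true _⟩
  refine Prod.ext (le_antisymm hle.1 ?_) h
  exact c.closure_min (sup_le hP.1 hQ.1) (hK.isClosed_of_snd_eq_true h)

theorem sup_of_snd_eq_false (hK : PresentsLaM a c K e) {P Q : K} (h : (e (P ⊔ Q)).2 = false) :
    e (P ⊔ Q) = ((e P).1 ⊔ (e Q).1, false) := by
  have hP := hK.monotone (le_sup_left : P ≤ P ⊔ Q)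
  have hQ := hK.monotone (le_sup_right : Q ≤ P ⊔ Q)
  have hge : (e P).1 ⊔ (e Q).1 ≤ (e (P ⊔ Q)).1 := sup_le hP.1 hQ.1
  have hle := hK.sup_le_of_mem (p := ((e P).1 ⊔ (e Q).1, false))
    (Or.inl ⟨rfl, fun ha => hK.not_le_of_snd_eq_false h (ha.trans hge)⟩)
    ⟨le_sup_left, h ▸ hP.2⟩ ⟨le_sup_right, h ▸ hQ.2⟩
  exact Prod.ext (le_antisymm hle.1 hge) h

theorem snd_sup_eq_true (hK : PresentsLaM a c K e) {P Q : K}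
    (h : (e P).2 = true ∨ (e Q).2 = true ∨ a ≤ (e P).1 ⊔ (e Q).1) :
    (e (P ⊔ Q)).2 = true := by
  by_contra hPQ
  rw [Bool.not_eq_true] at hPQ
  have hP := (hK.monotone (le_sup_left : P ≤ P ⊔ Q)).2
  have hQ := (hK.monotone (le_sup_right : Q ≤ P ⊔ Q)).2
  rcases h with h | h | h
  · rw [h, hPQ] at hP
    exact absurd hP (by decide)
  · rw [h, hPQ] at hQ
    exact absurd hQ (by decide)
  · exact hK.not_le_of_snd_eq_false hPQ (hK.sup_of_snd_eq_false hPQ ▸ h)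

theorem snd_sup_eq_false (hK : PresentsLaM a c K e) {P Q : K} (hP : (e P).2 = false)
    (hQ : (e Q).2 = false) (ha : ¬ a ≤ (e P).1 ⊔ (e Q).1) : (e (P ⊔ Q)).2 = false := by
  have hle := (hK.sup_le_of_mem (p := ((e P).1 ⊔ (e Q).1, false)) (Or.inl ⟨rfl, ha⟩)
    ⟨le_sup_left, hP.le⟩ ⟨le_sup_right, hQ.le⟩).2
  exact le_antisymm hle (Bool.false_le _)

theorem inf_le (hK : PresentsLaM a c K e) {U V : K} (hUV : (e U).2 = false ∨ (e V).2 = false)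
    (hbot : (e U).1 ⊓ (e V).1 = ⊥) (P : K) : U ⊓ V ≤ P := by
  have hU := hK.monotone (inf_le_left : U ⊓ V ≤ U)
  have hV := hK.monotone (inf_le_right : U ⊓ V ≤ V)
  refine (hK.le_iff _ P).2 ⟨(le_inf hU.1 hV.1).trans (hbot ▸ bot_le), ?_⟩
  rcases hUV with h | h
  · exact (h ▸ hU.2).trans (Bool.false_le _)
  · exact (h ▸ hV.2).trans (Bool.false_le _)

theorem isClosed_of_maximal (hK : PresentsLaM a c K e) (hJ : JoinSemidistributive K)
    (hA : AtomisticLat L) (h : ExtensionPair L a {x | c.IsClosed x}) {x : L} (hax : ¬ a ≤ x)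
    (hmax : ∀ y, ¬ a ≤ y → x ≤ y → x = y) : c.IsClosed x := by
  by_contra hx
  have hlt : x < c x := (c.le_closure x).lt_of_ne fun h => hx (c.isClosed_iff.2 h.symm)
  obtain ⟨u, hu, hucx, hux⟩ := hA.exists_isAtom_le_not_le hlt.not_ge
  have haxu : a ≤ x ⊔ u := by
    by_contra hxu
    exact hux (hmax _ hxu le_sup_left ▸ le_sup_right)
  have hcx : c x = x ⊔ u :=
    le_antisymm (c.closure_min le_sup_left (h.2.2.2.2 _ haxu)) (sup_le (c.le_closure x) hucx)
  obtain ⟨P, hP⟩ := hK.exists_eq_false hax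
  obtain ⟨U, hU⟩ := hK.exists_eq_false (h.not_le_of_isAtom hu)
  obtain ⟨V, hV⟩ := hK.exists_eq_true h.2.2.2.1
  have hPU : e (P ⊔ U) = (c x, true) := by
    rw [hK.sup_of_snd_eq_true (hK.snd_sup_eq_true (by simp [hP, hU, haxu])), hP, hU, ← hcx,
      c.idempotent]
  have hPV : e (P ⊔ V) = (c x, true) := by
    rw [hK.sup_of_snd_eq_true (hK.snd_sup_eq_true (by simp [hV])), hP, hV, sup_bot_eq]
  have hPUP := hJ.sup_eq_left_of_inf_le (hK.injective (hPU.trans hPV.symm))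
    (hK.inf_le (by simp [hU]) (by simp [hU, hV]) P)
  simpa [hPU, hP] using congrArg e hPUP

theorem le_closure_of_closure_sup_eq (hK : PresentsLaM a c K e) (hJ : JoinSemidistributive K)
    (h : ExtensionPair L a {x | c.IsClosed x}) {x u v : L} (hu : IsAtom u) (hv : IsAtom v)
    (huv : u ≠ v) (heq : c (x ⊔ u) = c (x ⊔ v)) : u ≤ c x := by
  obtain ⟨P, hP⟩ := hK.exists_eq_true (c.isClosed_closure x)
  obtain ⟨U, hU⟩ := hK.exists_eq_false (h.not_le_of_isAtom hu)
  obtain ⟨V, hV⟩ := hK.exists_eq_false (h.not_le_of_isAtom hv)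
  have hsup : ∀ {W w}, e W = (w, false) → e (P ⊔ W) = (c (x ⊔ w), true) := fun hW => by
    rw [hK.sup_of_snd_eq_true (hK.snd_sup_eq_true (by simp [hP])), hP, hW,
      c.closure_sup_closure_left]
  have hUV : P ⊔ U = P ⊔ V := hK.injective (by rw [hsup hU, hsup hV, heq])
  have hPUP := hJ.sup_eq_left_of_inf_le hUV
    (hK.inf_le (by simp [hU]) (by simp [hU, hV, (hu.disjoint_of_ne hv huv).eq_bot]) P)
  have hcu : c (x ⊔ u) = c x := by simpa [hsup hU, hP] using congrArg e hPUP
  exact le_sup_right.trans ((c.le_closure _).trans hcu.le)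

theorem exists_mem_atomsLaM (hK : PresentsLaM a c K e) (hA : AtomisticLat L)
    (h : ExtensionPair L a {x | c.IsClosed x}) {P Q : K} (hPQ : ¬ P ≤ Q) :
    ∃ U ∈ e ⁻¹' atomsLaM L, U ≤ P ∧ ¬ U ≤ Q := by
  by_cases hle : (e P).1 ≤ (e Q).1
  · have hnle : ¬ (e P).2 ≤ (e Q).2 := fun h2 => hPQ ((hK.le_iff P Q).2 ⟨hle, h2⟩)
    obtain ⟨hP, hQ⟩ : (e P).2 = true ∧ (e Q).2 = false := by
      revert hnle
      cases (e P).2 <;> cases (e Q).2 <;> decide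
    obtain ⟨U, hU⟩ := hK.exists_eq_true h.2.2.2.1
    refine ⟨U, by simp [atomsLaM, hU], (hK.le_iff U P).2 (hU ▸ ⟨bot_le, hP.ge⟩), fun hUQ => ?_⟩
    have := (hK.monotone hUQ).2
    simp only [hU, hQ] at this
    exact absurd this (by decide)
  · obtain ⟨u, hu, huP, huQ⟩ := hA.exists_isAtom_le_not_le hle
    obtain ⟨U, hU⟩ := hK.exists_eq_false (h.not_le_of_isAtom hu)
    exact ⟨U, by simp [atomsLaM, hU, hu], (hK.le_iff U P).2 (hU ▸ ⟨huP, Bool.false_le _⟩),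
      fun hUQ => huQ (hU ▸ hK.monotone hUQ).1⟩

theorem closure_sup_eq_of_sup_eq (hK : PresentsLaM a c K e)
    (hii : ∀ x u v : L, IsAtom u → IsAtom v → u ≠ v → c (x ⊔ u) = c (x ⊔ v) → u ≤ c x)
    {P U V : K} (hU : e U ∈ atomsLaM L) (hV : e V ∈ atomsLaM L) (hUV : U ≠ V)
    (h : P ⊔ U = P ⊔ V) (htag : (e (P ⊔ U)).2 = true) :
    c ((e P).1 ⊔ (e U).1) = c (e P).1 := by
  have heq : c ((e P).1 ⊔ (e U).1) = c ((e P).1 ⊔ (e V).1) := by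
    have hPU := hK.sup_of_snd_eq_true htag
    rw [h] at hPU htag
    exact congrArg Prod.fst (hPU.symm.trans (hK.sup_of_snd_eq_true htag))
  rcases hU with hU | ⟨hu, hUf⟩
  · simp [hU]
  rcases hV with hV | ⟨hv, hVf⟩
  · simp [heq, hV]
  have huv : (e U).1 ≠ (e V).1 :=
    fun huv => hUV (hK.injective (Prod.ext huv (hUf.trans hVf.symm)))
  exact le_antisymm
    (c.closure_min (sup_le (c.le_closure _) (hii _ _ _ hu hv huv heq)) (c.isClosed_closure _))
    (c.monotone le_sup_left)

theorem sup_eq_left_of_sup_eq (hK : PresentsLaM a c K e) (hSD : JoinSemidistributive L)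
    (hii : ∀ x u v : L, IsAtom u → IsAtom v → u ≠ v → c (x ⊔ u) = c (x ⊔ v) → u ≤ c x)
    (hclosure : ∀ x, ¬ a ≤ x → ¬ a ≤ c x) {P U V : K} (hU : e U ∈ atomsLaM L)
    (hV : e V ∈ atomsLaM L) (hUV : U ≠ V) (h : P ⊔ U = P ⊔ V) : P ⊔ U = P := by
  apply hK.injective
  cases htag : (e (P ⊔ U)).2
  · have hfalse : ∀ {X}, X ≤ P ⊔ U → (e X).2 = false := fun hX =>
      le_antisymm (htag ▸ (hK.monotone hX).2) (Bool.false_le _)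
    have hUf := hfalse le_sup_right
    have hVf := hfalse (le_sup_right.trans h.ge)
    have hu : IsAtom (e U).1 := by rcases hU with hU | hU <;> simp_all
    have hv : IsAtom (e V).1 := by rcases hV with hV | hV <;> simp_all
    have huv : (e U).1 ≠ (e V).1 :=
      fun huv => hUV (hK.injective (Prod.ext huv (hUf.trans hVf.symm)))
    have hsup : (e P).1 ⊔ (e U).1 = (e P).1 ⊔ (e V).1 := by
      have hPU := hK.sup_of_snd_eq_false htag
      rw [h] at hPU htag
      exact congrArg Prod.fst (hPU.symm.trans (hK.sup_of_snd_eq_false htag))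
    rw [hK.sup_of_snd_eq_false htag,
      hSD.sup_eq_left_of_inf_le hsup ((hu.disjoint_of_ne hv huv).le_bot.trans bot_le),
      ← hfalse le_sup_left]
  · rw [hK.sup_of_snd_eq_true htag, hK.closure_sup_eq_of_sup_eq hii hU hV hUV h htag]
    cases hP : (e P).2
    · exfalso
      -- joining `P` to a generator `X = (x, false)` must cross `a`, yet stays below `c (e P).1`
      have hcross : ∀ {X}, (e X).2 = false → P ⊔ X = P ⊔ U →
          c ((e P).1 ⊔ (e X).1) = c (e P).1 → False := fun hXf hX hcX => by
        refine hclosure _ (hK.not_le_of_snd_eq_false hP)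
          (le_trans ?_ ((c.le_closure _).trans hcX.le))
        by_contra ha
        simp [← hX, hK.snd_sup_eq_false hP hXf ha] at htag
      rcases Set.mem_insert_iff.1 hU with hU' | ⟨-, hUf⟩
      · rcases Set.mem_insert_iff.1 hV with hV' | ⟨-, hVf⟩
        · exact hUV (hK.injective (hU'.trans hV'.symm))
        · exact hcross hVf h.symm
            (hK.closure_sup_eq_of_sup_eq hii hV hU hUV.symm h.symm (h ▸ htag))
      · exact hcross hUf rfl (hK.closure_sup_eq_of_sup_eq hii hU hV hUV h htag)
    · exact Prod.ext (hK.isClosed_of_snd_eq_true hP).closure_eq hP.symm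

end PresentsLaM

end ExtensionLattice

/-- `L(a;M)` (presented as a lattice `K` order-isomorphic to the
subposet `LaMSet L a M` of `L × 2`) is join-semidistributive iff (i) every
maximal element of `L \ [a,⊤]` belongs to `M`, and (ii) for all `x ∈ L` and
distinct atoms `u, v`, `f(x ⊔ u) = f(x ⊔ v)` implies `u ≤ f x`, where `f` is
the closure operator associated with `M`. -/
theorem stmt_9 (L : Type) [Lattice L] [Fintype L] [BoundedOrder L]
    (hA : AtomisticLat L) (hSD : JoinSemidistributive L)
    (a : L) (M : Set L) (h : ExtensionPair L a M)
    (f : L → L) (hf : ∀ x : L, IsLeast {y : L | y ∈ M ∧ x ≤ y} (f x))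
    (K : Type) [Lattice K] (e : K → L × Bool)
    (hrange : Set.range e = LaMSet L a M)
    (hmono : ∀ x y : K, x ≤ y ↔ e x ≤ e y) :
    JoinSemidistributive K ↔
      ((∀ x : L, ¬ a ≤ x → (∀ y : L, ¬ a ≤ y → x ≤ y → x = y) → x ∈ M) ∧
       ∀ x u v : L, IsAtom u → IsAtom v → u ≠ v →
         f (x ⊔ u) = f (x ⊔ v) → u ≤ f x) := by
  let c : ClosureOperator L := .ofPred f (· ∈ M) (fun x => (hf x).1.2) (fun x => (hf x).1.1)
    fun x _ hxy hy => (hf x).2 ⟨hy, hxy⟩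
  have hK : PresentsLaM a c K e := ⟨hrange, hmono⟩
  refine ⟨fun hJ => ⟨fun x => hK.isClosed_of_maximal hJ hA h,
    fun x u v => hK.le_closure_of_closure_sup_eq hJ h⟩, fun ⟨hmax, hii⟩ => ?_⟩
  have : Finite K := Finite.of_injective e hK.injective
  exact .of_dense _ (fun P Q => hK.exists_mem_atomsLaM hA h)
    fun P U hU V hV => hK.sup_eq_left_of_sup_eq hSD hii
      (fun _ => ClosureOperator.not_le_closure hmax) hU hV
end

section
/- Let L be a finite, atomistic, join-semidistributive lattice, let p, q be distinct atoms of L, let a ∈ L be neither 0 nor an atom, with p ≤ a ∨ q, p ≰ a, and p ≰ x ∨ q for all x < a. Define f : L → L by f(x) = x if q ≰ p ∨ x and f(x) = p ∨ x if q ≤ p ∨ x. Then f is a closure operator on L, and its range M together with a forms an extension pair (a;M) of L (i.e., M is a meet-subsemilattice of L containing {0} ∪ [a,1]). -/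
/-!
Adjoining `p` exactly to the elements `x` with `q ≤ p ⊔ x` is a closure operator in any lattice,
and its closed elements are those `x` with `q ≤ p ⊔ x → p ≤ x`; closed elements of a closure
operator are always closed under meets, and `⊥` is closed because `q ≰ p`. The only real point
is that every `x ≥ a` is closed: if `q ≤ p ⊔ x` then `x ⊔ p = x ⊔ q` because `p ≤ a ⊔ q`, and
join-semidistributivity turns this into `x ⊔ p = x ⊔ (p ⊓ q) = x`.
-/

theorem ClosureOperator.IsClosed.inf {α : Type*} [SemilatticeInf α] {c : ClosureOperator α}
    {x y : α} (hx : c.IsClosed x) (hy : c.IsClosed y) : c.IsClosed (x ⊓ y) :=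
  isClosed_iff_closure_le.2 <| (c.closure_inf_le x y).trans <| by
    rw [hx.closure_eq, hy.closure_eq]

theorem JoinSemidistributive.le_of_sup_eq_sup {L : Type*} [Lattice L] [OrderBot L]
    (hSD : JoinSemidistributive L) {p q x : L} (hpq : Disjoint p q) (h : x ⊔ p = x ⊔ q) :
    p ≤ x := by
  have := hSD x p q h
  rwa [hpq.eq_bot, sup_bot_eq, sup_eq_left] at this

namespace ClosureOperator

variable {L : Type*} [Lattice L] {p q x : L}

open scoped Classical in
noncomputable def condSup (p q : L) : ClosureOperator L :=
  .mk' (fun x ↦ if q ≤ p ⊔ x then p ⊔ x else x)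
    (fun x y hxy ↦ by
      by_cases hx : q ≤ p ⊔ x
      · have hy : q ≤ p ⊔ y := hx.trans (sup_le_sup_left hxy p)
        simpa only [if_pos hx, if_pos hy] using sup_le_sup_left hxy p
      · by_cases hy : q ≤ p ⊔ y
        · simpa only [if_neg hx, if_pos hy] using hxy.trans le_sup_right
        · simpa only [if_neg hx, if_neg hy] using hxy)
    (fun x ↦ by split_ifs <;> simp)
    (fun x ↦ by
      by_cases hx : q ≤ p ⊔ x
      · simp only [if_pos hx, ← sup_assoc, sup_idem, le_refl]
      · simp only [if_neg hx, le_refl])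

theorem condSup_of_le (h : q ≤ p ⊔ x) : condSup p q x = p ⊔ x := if_pos h

theorem condSup_of_not_le (h : ¬ q ≤ p ⊔ x) : condSup p q x = x := if_neg h

theorem isClosed_condSup_iff : (condSup p q).IsClosed x ↔ (q ≤ p ⊔ x → p ≤ x) := by
  rw [isClosed_iff_closure_le]
  by_cases h : q ≤ p ⊔ x
  · simp only [condSup_of_le h, sup_le_iff, le_refl, and_true, h, forall_const]
  · simp only [condSup_of_not_le h, le_refl, h, false_imp_iff]

theorem isClosed_condSup_bot [OrderBot L] (hqp : ¬ q ≤ p) : (condSup p q).IsClosed ⊥ :=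
  isClosed_condSup_iff.2 fun h ↦ absurd (sup_bot_eq p ▸ h) hqp

theorem isClosed_condSup_of_le [OrderBot L] (hSD : JoinSemidistributive L) {a : L}
    (hpq : Disjoint p q) (hpa : p ≤ a ⊔ q) (hax : a ≤ x) : (condSup p q).IsClosed x :=
  isClosed_condSup_iff.2 fun hq ↦ hSD.le_of_sup_eq_sup hpq <| le_antisymm
    (sup_le le_sup_left (hpa.trans (sup_le_sup_right hax q)))
    (sup_le le_sup_left (hq.trans (sup_comm p x).le))

end ClosureOperator

open ClosureOperator in
theorem stmt_11_general (L : Type) [Lattice L] [BoundedOrder L]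
    (hSD : JoinSemidistributive L)
    (p q a : L) (hp : IsAtom p) (hq : IsAtom q) (hpq : p ≠ q)
    (ha0 : a ≠ ⊥) (haAt : ¬ IsAtom a)
    (h1 : p ≤ a ⊔ q)
    (f : L → L)
    (hf1 : ∀ x : L, ¬ q ≤ p ⊔ x → f x = x)
    (hf2 : ∀ x : L, q ≤ p ⊔ x → f x = p ⊔ x) :
    (∀ x : L, x ≤ f x) ∧
    (∀ x y : L, x ≤ y → f x ≤ f y) ∧
    (∀ x : L, f (f x) = f x) ∧
    ExtensionPair L a (Set.range f) := by
  obtain rfl : f = condSup p q := funext fun x ↦ by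
    by_cases h : q ≤ p ⊔ x
    · rw [hf2 x h, condSup_of_le h]
    · rw [hf1 x h, condSup_of_not_le h]
  have hqp : ¬ q ≤ p := fun h ↦ hpq ((hp.le_iff_eq hq.1).1 h).symm
  rw [← setOfPred_isClosed_eq_range_closure]
  exact ⟨le_closure _, fun _ _ h ↦ (condSup p q).monotone h, idempotent _, ha0, haAt,
    fun _ hx _ hy ↦ Set.mem_ofPred.2 (hx.inf hy), isClosed_condSup_bot hqp,
    fun _ hax ↦ isClosed_condSup_of_le hSD (hp.disjoint_of_ne hq hpq) h1 hax⟩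

theorem stmt_11 (L : Type) [Lattice L] [Fintype L] [BoundedOrder L]
    (hA : AtomisticLat L) (hSD : JoinSemidistributive L)
    (p q a : L) (hp : IsAtom p) (hq : IsAtom q) (hpq : p ≠ q)
    (ha0 : a ≠ ⊥) (haAt : ¬ IsAtom a)
    (h1 : p ≤ a ⊔ q) (h2 : ¬ p ≤ a)
    (h3 : ∀ x : L, x < a → ¬ p ≤ x ⊔ q)
    (f : L → L)
    (hf1 : ∀ x : L, ¬ q ≤ p ⊔ x → f x = x)
    (hf2 : ∀ x : L, q ≤ p ⊔ x → f x = p ⊔ x) :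
    (∀ x : L, x ≤ f x) ∧
    (∀ x y : L, x ≤ y → f x ≤ f y) ∧
    (∀ x : L, f (f x) = f x) ∧
    ExtensionPair L a (Set.range f) :=
  stmt_11_general L hSD p q a hp hq hpq ha0 haAt h1 f hf1 hf2
end

section
/- In every finite, atomistic, join-semidistributive lattice L, every element a has a least (with respect to containment) set X of atoms with a = ⋁X; this minimal decomposition ∂(a) consists exactly of the atoms of L that are join-prime in the interval [0,a]. -/
/-!
Semidistributivity extends to finite joins: `x ⊔ y = x ⊔ ⋁ Z` forces `x ⊔ y = x ⊔ ⋁ (y ⊓ z)`.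
When `y` is an atom outside a set `Z` of atoms every `y ⊓ z` is `⊥`, so `y ≤ x`. Hence an atom `p`
of an inclusion-minimal decomposition `D` of `a` lies in every set of atoms `Z` with
`⋁ (D \ {p}) ⊔ ⋁ Z = a`, as otherwise `D \ {p}` would be a smaller decomposition. Taking for `Z`
another decomposition of `a` shows that `D` is least; taking for `Z` decompositions of `x` and `y`
with `p ≤ x ⊔ y ≤ a` shows that `p` is join-prime in `[⊥, a]`. Conversely an atom join-prime in
`[⊥, a]` lies below, hence equals, a member of every decomposition of `a`.
-/

section

variable {L : Type*} [Lattice L] [OrderBot L]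

def IsAtomDecomposition (a : L) (X : Finset L) : Prop :=
  (∀ p ∈ X, IsAtom p) ∧ X.sup id = a

/-- Join-primality of `p` in the interval `[⊥, a]`, apart from `p ≠ ⊥`. -/
def IsSupPrimeBelow (a p : L) : Prop :=
  ∀ x y : L, x ≤ a → y ≤ a → p ≤ x ⊔ y → p ≤ x ∨ p ≤ y

theorem AtomisticLat.exists_isAtomDecomposition [Finite L] (hA : AtomisticLat L) (a : L) :
    ∃ X, IsAtomDecomposition a X := by
  obtain ⟨s, hs, hlub⟩ := hA a
  refine ⟨s.toFinite.toFinset, by simpa using hs, le_antisymm ?_ ?_⟩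
  · exact Finset.sup_le fun p hp => hlub.1 (by simpa using hp)
  · exact hlub.2 fun p hp => Finset.le_sup (f := id) (by simpa using hp)

theorem IsAtomDecomposition.le {a p : L} {X : Finset L} (hX : IsAtomDecomposition a X)
    (hp : p ∈ X) : p ≤ a :=
  hX.2 ▸ Finset.le_sup (f := id) hp

theorem IsAtomDecomposition.mem_of_isSupPrimeBelow {a p : L} {X : Finset L}
    (hX : IsAtomDecomposition a X) (hp : IsAtom p) (hpa : p ≤ a) (hprime : IsSupPrimeBelow a p) :
    p ∈ X := by
  have hsup : X.sup id ≤ a → p ≤ X.sup id → p ∈ X := by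
    refine Finset.sup_induction (p := fun b => b ≤ a → p ≤ b → p ∈ X) ?_ ?_ ?_
    · exact fun _ hp_bot => absurd (le_bot_iff.1 hp_bot) hp.ne_bot
    · intro b₁ h₁ b₂ h₂ hb hpb
      rcases hprime b₁ b₂ (le_sup_left.trans hb) (le_sup_right.trans hb) hpb with hpb₁ | hpb₂
      · exact h₁ (le_sup_left.trans hb) hpb₁
      · exact h₂ (le_sup_right.trans hb) hpb₂
    · intro q hq _ hpq
      rwa [(hX.1 q hq).le_iff_eq hp.ne_bot |>.1 hpq]
  exact hsup hX.2.le (hX.2 ▸ hpa)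

namespace JoinSemidistributive

theorem sup_eq_sup_finset_sup_inf (hSD : JoinSemidistributive L) {ι : Type*} (f : ι → L)
    (s : Finset ι) : ∀ {x y : L}, x ⊔ y = x ⊔ s.sup f → x ⊔ y = x ⊔ s.sup (fun i => y ⊓ f i) := by
  induction s using Finset.cons_induction with
  | empty => exact fun h => by simpa using h
  | cons i s _ ih =>
    intro x y h
    rw [Finset.sup_cons] at h ⊢
    have hs : s.sup f ≤ x ⊔ y := h ▸ le_sup_of_le_right le_sup_right
    have hy : (x ⊔ s.sup f) ⊔ y = x ⊔ y := by rw [sup_right_comm, sup_eq_left.2 hs]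
    have h₁ : x ⊔ y = (x ⊔ s.sup f) ⊔ (y ⊓ f i) := by
      rw [← hy]; exact hSD _ _ _ (by rw [hy, h]; ac_rfl)
    have h₂ : (x ⊔ y ⊓ f i) ⊔ y = x ⊔ y := by
      rw [sup_assoc, sup_eq_right.2 (inf_le_left : y ⊓ f i ≤ y)]
    have h₃ : (x ⊔ y ⊓ f i) ⊔ y = (x ⊔ y ⊓ f i) ⊔ s.sup f := by
      rw [h₂, h₁]; ac_rfl
    rw [← h₂, ih h₃, sup_assoc]

theorem le_of_sup_eq_sup_finset_sup_atoms (hSD : JoinSemidistributive L) {x y : L}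
    {Z : Finset L} (hy : IsAtom y) (hZ : ∀ z ∈ Z, IsAtom z) (hyZ : y ∉ Z)
    (h : x ⊔ y = x ⊔ Z.sup id) : y ≤ x := by
  have hbot : Z.sup (fun z => y ⊓ id z) = ⊥ :=
    (Finset.sup_eq_bot_iff _ _).2 fun z hz =>
      disjoint_iff.1 (hy.disjoint_of_ne (hZ z hz) fun hyz => hyZ (hyz ▸ hz))
  have hxy := hSD.sup_eq_sup_finset_sup_inf id Z h
  rw [hbot, sup_bot_eq] at hxy
  exact sup_eq_left.1 hxy

end JoinSemidistributive

theorem Finset.sup_erase_sup_eq {α : Type*} [SemilatticeSup α] [OrderBot α] [DecidableEq α]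
    {s : Finset α} {a : α} (ha : a ∈ s) : (s.erase a).sup id ⊔ a = s.sup id := by
  conv_rhs => rw [← Finset.insert_erase ha]
  rw [Finset.sup_insert, id, sup_comm]

variable [DecidableEq L]

theorem Minimal.mem_of_sup_erase_sup_eq (hSD : JoinSemidistributive L) {a p : L}
    {D Z : Finset L} (hD : Minimal (IsAtomDecomposition a) D) (hp : p ∈ D)
    (hZ : ∀ z ∈ Z, IsAtom z) (h : (D.erase p).sup id ⊔ Z.sup id = a) : p ∈ Z := by
  by_contra hpZ
  have hsplit : (D.erase p).sup id ⊔ p = a := by rw [Finset.sup_erase_sup_eq hp, hD.prop.2]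
  have hp_le : p ≤ (D.erase p).sup id :=
    hSD.le_of_sup_eq_sup_finset_sup_atoms (hD.prop.1 p hp) hZ hpZ (by rw [hsplit, h])
  refine hD.not_prop_of_lt (Finset.erase_ssubset hp) ⟨?_, ?_⟩
  · exact fun q hq => hD.prop.1 q (Finset.mem_of_mem_erase hq)
  · rwa [sup_eq_left.2 hp_le] at hsplit

theorem Minimal.subset_of_isAtomDecomposition (hSD : JoinSemidistributive L) {a : L}
    {D Y : Finset L} (hD : Minimal (IsAtomDecomposition a) D) (hY : IsAtomDecomposition a Y) :
    D ⊆ Y := fun p hp =>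
  hD.mem_of_sup_erase_sup_eq hSD hp hY.1 <| by
    rw [hY.2, sup_eq_right]
    exact Finset.sup_le fun q hq => hD.prop.le (Finset.mem_of_mem_erase hq)

theorem Minimal.isSupPrimeBelow_of_mem [Finite L] (hA : AtomisticLat L)
    (hSD : JoinSemidistributive L) {a p : L} {D : Finset L}
    (hD : Minimal (IsAtomDecomposition a) D) (hp : p ∈ D) : IsSupPrimeBelow a p := by
  intro x y hxa hya hpxy
  obtain ⟨U, hU⟩ := hA.exists_isAtomDecomposition x
  obtain ⟨V, hV⟩ := hA.exists_isAtomDecomposition y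
  have hUV : (D.erase p).sup id ⊔ (U ∪ V).sup id = a := by
    rw [Finset.sup_union, hU.2, hV.2]
    refine le_antisymm ?_ ?_
    · refine sup_le (Finset.sup_le fun q hq => ?_) (sup_le hxa hya)
      exact hD.prop.le (Finset.mem_of_mem_erase hq)
    · rw [← Finset.sup_erase_sup_eq hp |>.trans hD.prop.2]
      exact sup_le_sup_left hpxy _
  rcases Finset.mem_union.1 (hD.mem_of_sup_erase_sup_eq hSD hp
    (fun q hq => (Finset.mem_union.1 hq).elim (hU.1 q) (hV.1 q)) hUV) with hpU | hpV
  · exact Or.inl (hU.le hpU)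
  · exact Or.inr (hV.le hpV)

end

theorem stmt_15 (L : Type) [Lattice L] [Fintype L] [OrderBot L]
    [DecidableEq L]
    (hA : AtomisticLat L) (hSD : JoinSemidistributive L) (a : L) :
    ∃ X : Finset L, (∀ p ∈ X, IsAtom p) ∧ a = X.sup id ∧
      (∀ Y : Finset L, (∀ p ∈ Y, IsAtom p) → a = Y.sup id → X ⊆ Y) ∧
      (∀ p : L, p ∈ X ↔ IsAtom p ∧ p ≤ a ∧
        ∀ x y : L, x ≤ a → y ≤ a → p ≤ x ⊔ y → p ≤ x ∨ p ≤ y) := by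
  obtain ⟨D, hD⟩ :=
    exists_minimal_of_wellFoundedLT (IsAtomDecomposition a) (hA.exists_isAtomDecomposition a)
  refine ⟨D, hD.prop.1, hD.prop.2.symm,
    fun Y hY hYa => hD.subset_of_isAtomDecomposition hSD ⟨hY, hYa.symm⟩, fun p => ⟨?_, ?_⟩⟩
  · exact fun hp => ⟨hD.prop.1 p hp, hD.prop.le hp, hD.isSupPrimeBelow_of_mem hA hSD hp⟩
  · exact fun ⟨hp, hpa, hprime⟩ => hD.prop.mem_of_isSupPrimeBelow hp hpa hprime
end

section
/- There exists a finite, atomistic, join-semidistributive lattice that cannot be embedded into any finite atomistic biatomic join-semidistributive lattice. Specifically, the lattice L of all intersections with E = {a,b,c,u,v} of convex subsets of ℚ², where a = (0,3), b = (-2,0), c = (2,0), u = (-1,1), v = (1,1), is finite, atomistic, join-semidistributive, and fails the quasi-identity θ (taking the indicated five elements as singletons witnesses the failure with u ≰ a), hence admits no such embedding. -/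
/-- The five points of the configuration. -/
def Pa : ℚ × ℚ := (0, 3)
def Pb : ℚ × ℚ := (-2, 0)
def Pc : ℚ × ℚ := (2, 0)
def Pu : ℚ × ℚ := (-1, 1)
def Pv : ℚ × ℚ := (1, 1)

def Efive : Set (ℚ × ℚ) := {Pa, Pb, Pc, Pu, Pv}

/-!
In a finite atomistic biatomic join-semidistributive lattice, the premises of `θ` together with
`u ≰ a` let one zig-zag between atoms `p ≤ a ⊔ u` and `q ≤ a ⊔ v` lying off `a`, each covered by
`b ⊔ c` and the next one (biatomicity). Starting from such an atom `p` for which `b ⊔ c ⊔ p` is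
maximal, the joins stabilise, so `b ⊔ c ⊔ p = b ⊔ c ⊔ q` for distinct atoms `p`, `q`, and
join-semidistributivity forces `p ≤ (a ⊔ u) ⊓ (b ⊔ c) ≤ a`, a contradiction. The quasi-identity
passes to sublattices.

On the other hand, `Co(ℚ², E)` is the lattice of closed sets of a finite convex geometry: every
closed set is the closure of its extreme points, which makes it join-semidistributive. Since `u`
lies in the triangle `abv` and `v` in the triangle `acu`, the singletons satisfy the premises of
`θ` while `u ≰ a`. The traces themselves are certified by explicit convex combinations and
separating half-planes.
-/

section Theta

variable {L M : Type*} [Lattice L] [Lattice M]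

/-- The premises of the quasi-identity `θ`, whose conclusion is `u ≤ a`. -/
def ThetaPremises (a b c u v : L) : Prop :=
  u ≤ a ⊔ b ⊔ v ∧ v ≤ a ⊔ c ⊔ u ∧ (a ⊔ u) ⊓ (b ⊔ c) ≤ a ∧
    (a ⊔ b) ⊓ (a ⊔ u) = a ∧ (a ⊔ c) ⊓ (a ⊔ v) = a ∧ (a ⊔ u) ⊓ (a ⊔ v) = a

instance [DecidableEq L] [DecidableLE L] {a b c u v : L} :
    Decidable (ThetaPremises a b c u v) :=
  inferInstanceAs (Decidable (_ ∧ _))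

theorem ThetaPremises.map {F : Type*} [FunLike F L M] [LatticeHomClass F L M] (f : F)
    {a b c u v : L} (h : ThetaPremises a b c u v) :
    ThetaPremises (f a) (f b) (f c) (f u) (f v) := by
  obtain ⟨h₁, h₂, h₃, h₄, h₅, h₆⟩ := h
  simp only [ThetaPremises, ← map_sup, ← map_inf]
  exact ⟨OrderHomClass.mono f h₁, OrderHomClass.mono f h₂, OrderHomClass.mono f h₃,
    congrArg f h₄, congrArg f h₅, congrArg f h₆⟩

theorem LatticeHom.le_iff_le_of_injective (f : LatticeHom L M) (hf : Function.Injective f)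
    {x y : L} : f x ≤ f y ↔ x ≤ y := by
  refine ⟨fun h => ?_, fun h => OrderHomClass.mono f h⟩
  rw [← inf_eq_left, ← map_inf] at h
  exact inf_eq_left.mp (hf h)

variable [OrderBot M]

theorem exists_atom_le_not_le (hM : AtomisticLat M) {u a : M} (hua : ¬ u ≤ a) :
    ∃ p, IsAtom p ∧ p ≤ u ∧ ¬ p ≤ a := by
  obtain ⟨s, hs, hsu⟩ := hM u
  by_contra! h
  exact hua (hsu.2 fun p hp => h p (hs p hp) (hsu.1 hp))

theorem IsBiatomicLat.exists_atom_step (hM : IsBiatomicLat M) {a b u v p : M} (hp : IsAtom p)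
    (hpu : p ≤ a ⊔ u) (hpa : ¬ p ≤ a) (hu : u ≤ a ⊔ b ⊔ v) (hab : (a ⊔ b) ⊓ (a ⊔ u) = a) :
    ∃ q, IsAtom q ∧ q ≤ a ⊔ v ∧ ¬ q ≤ a ∧ p ≤ b ⊔ q := by
  have hp_le : p ≤ b ⊔ (a ⊔ v) :=
    hpu.trans (sup_le (le_sup_of_le_right le_sup_left) (hu.trans_eq (by ac_rfl)))
  have hp_not_le : ¬ p ≤ a ⊔ b := fun h => hpa (hab ▸ le_inf h hpu)
  by_cases hb : b = ⊥
  · subst hb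
    exact ⟨p, hp, by simpa using hp_le, hpa, le_sup_right⟩
  by_cases hav : a ⊔ v = ⊥
  · rw [hav, sup_bot_eq] at hp_le
    exact absurd (hp_le.trans le_sup_right) hp_not_le
  obtain ⟨x, q, -, hxb, hq, hqav, hpxq⟩ := hM.2 p b (a ⊔ v) hp hb hav hp_le
  refine ⟨q, hq, hqav, fun hqa => hp_not_le ?_, hpxq.trans (sup_le_sup_right hxb q)⟩
  exact hpxq.trans (sup_le (hxb.trans le_sup_right) (hqa.trans le_sup_left))

theorem ThetaPremises.le [Finite M] (hA : AtomisticLat M) (hB : IsBiatomicLat M)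
    (hJ : JoinSemidistributive M) {a b c u v : M} (h : ThetaPremises a b c u v) : u ≤ a := by
  obtain ⟨h₁, h₂, h₃, h₄, h₅, h₆⟩ := h
  by_contra hua
  let U : Set M := {p | IsAtom p ∧ p ≤ a ⊔ u ∧ ¬ p ≤ a}
  have hU : U.Nonempty := by
    obtain ⟨p, hp, hpu, hpa⟩ := exists_atom_le_not_le hA hua
    exact ⟨p, hp, hpu.trans le_sup_right, hpa⟩
  -- Zig-zag from an atom of `U` whose join with `b ⊔ c` is maximal; the join cannot grow.
  obtain ⟨p, ⟨hp, hpu, hpa⟩, hmax⟩ := U.toFinite.exists_maximalFor (b ⊔ c ⊔ ·) U hU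
  obtain ⟨q, hq, hqv, hqa, hpq⟩ := hB.exists_atom_step hp hpu hpa h₁ h₄
  obtain ⟨p', hp', hp'u, hp'a, hqp'⟩ := hB.exists_atom_step hq hqv hqa h₂ h₅
  have hpq_le : b ⊔ c ⊔ p ≤ b ⊔ c ⊔ q :=
    sup_le le_sup_left (hpq.trans (sup_le_sup_right le_sup_left q))
  have hqp'_le : b ⊔ c ⊔ q ≤ b ⊔ c ⊔ p' :=
    sup_le le_sup_left (hqp'.trans (sup_le_sup_right le_sup_right p'))
  have hjoin : b ⊔ c ⊔ p = b ⊔ c ⊔ q :=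
    hpq_le.antisymm (hqp'_le.trans (hmax ⟨hp', hp'u, hp'a⟩ (hpq_le.trans hqp'_le)))
  have hpq_ne : p ≠ q := by
    rintro rfl
    exact hpa (h₆ ▸ le_inf hpu hqv)
  have hp_le : p ≤ b ⊔ c := by
    have := hJ _ _ _ hjoin
    rwa [(hp.disjoint_of_ne hq hpq_ne).eq_bot, sup_bot_eq, sup_eq_left] at this
  exact hpa ((le_inf hpu hp_le).trans h₃)

end Theta

namespace ClosureOperator

section Lattice

variable {α : Type*} [Lattice α] (c : ClosureOperator α)

instance : Lattice c.Closeds := c.gi.liftLattice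

instance [OrderBot α] : OrderBot c.Closeds := c.gi.gc.liftOrderBot

end Lattice

variable {α : Type*} [DecidableEq α] (c : ClosureOperator (Finset α))

instance : DecidablePred c.IsClosed := fun _ => decidable_of_iff _ c.isClosed_iff.symm

def extremePoints (s : Finset α) : Finset α := {p ∈ s | p ∉ c (s.erase p)}

variable {c}

theorem extremePoints_closure_subset (s : Finset α) : c.extremePoints (c s) ⊆ s := by
  intro p hp
  by_contra hps
  simp only [extremePoints, Finset.mem_filter] at hp
  refine hp.2 (c.monotone ?_ hp.1)
  exact fun x hx => Finset.mem_erase.mpr ⟨by rintro rfl; exact hps hx, c.le_closure s hx⟩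

theorem joinSemidistributive_closeds
    (hc : ∀ s, c.IsClosed s → c (c.extremePoints s) = s) :
    JoinSemidistributive c.Closeds := by
  intro x y z h
  refine le_antisymm ?_ (sup_le_sup_left inf_le_left x)
  have hyz : c ((x : Finset α) ⊔ y) = c ((x : Finset α) ⊔ z) := congrArg Subtype.val h
  change c (x ⊔ y) ≤ c (x ⊔ (y ⊓ z))
  have hext :
      c.extremePoints (c (x ⊔ y)) ≤ (x : Finset α) ⊔ (y : Finset α) ⊓ (z : Finset α) := by
    rw [sup_inf_left]
    refine le_inf (extremePoints_closure_subset _) ?_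
    rw [hyz]
    exact extremePoints_closure_subset _
  rw [← hc _ (c.isClosed_closure _)]
  exact c.monotone hext

theorem isAtom_closeds_singleton (h₀ : c.IsClosed ∅) {a : α} (ha : c.IsClosed {a}) :
    IsAtom (⟨{a}, ha⟩ : c.Closeds) := by
  have hbot : ((⊥ : c.Closeds) : Finset α) = ∅ := h₀.closure_eq
  refine ⟨fun h => ?_, fun x hx => Subtype.ext ?_⟩
  · simpa [hbot] using congrArg Subtype.val h
  · rw [hbot]
    exact Finset.ssubset_singleton_iff.mp hx

theorem atomisticLat_closeds (h₀ : c.IsClosed ∅) (h₁ : ∀ a, c.IsClosed {a}) :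
    AtomisticLat c.Closeds := by
  intro x
  refine ⟨{y | ∃ a ∈ (x : Finset α), y = ⟨{a}, h₁ a⟩}, ?_, ?_, ?_⟩
  · rintro _ ⟨a, -, rfl⟩
    exact isAtom_closeds_singleton h₀ (h₁ a)
  · rintro _ ⟨a, ha, rfl⟩
    exact Finset.singleton_subset_iff.mpr ha
  · intro y hy a ha
    exact Finset.singleton_subset_iff.mp (hy ⟨a, ha, rfl⟩)

end ClosureOperator

theorem Convex.smul_add_smul_add_smul_mem {𝕜 E : Type*} [Field 𝕜] [LinearOrder 𝕜]
    [IsStrictOrderedRing 𝕜] [AddCommGroup E] [Module 𝕜 E] {s : Set E} (hs : Convex 𝕜 s)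
    {x y z : E} (hx : x ∈ s) (hy : y ∈ s) (hz : z ∈ s) {a b c : 𝕜} (ha : 0 ≤ a) (hb : 0 ≤ b)
    (hc : 0 ≤ c) (habc : a + b + c = 1) : a • x + b • y + c • z ∈ s := by
  simpa [Fin.sum_univ_three] using hs.sum_mem (t := Finset.univ) (w := ![a, b, c])
    (z := ![x, y, z]) (by simp [Fin.forall_fin_succ, ha, hb, hc])
    (by simp [Fin.sum_univ_three, habc]) (by simp [Fin.forall_fin_succ, hx, hy, hz])

theorem not_mem_convexHull_of_lt {𝕜 E : Type*} [Field 𝕜] [LinearOrder 𝕜]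
    [IsStrictOrderedRing 𝕜] [AddCommGroup E] [Module 𝕜 E] (f : E →ₗ[𝕜] 𝕜) {s : Set E} {r : 𝕜}
    {q : E} (hs : ∀ p ∈ s, f p ≤ r) (hq : r < f q) : q ∉ convexHull 𝕜 s := fun h =>
  hq.not_ge (convexHull_min hs (convex_halfSpace_le f.isLinear r) h)

def pt : Fin 5 → ℚ × ℚ := ![Pa, Pb, Pc, Pu, Pv]

theorem pt_injective : Function.Injective pt := by decide

theorem range_pt : Set.range pt = Efive := by
  ext p
  simp only [pt, Efive, Matrix.range_cons, Matrix.range_empty, Set.union_empty,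
    Set.union_singleton, Set.union_insert, Set.mem_insert_iff, Set.mem_singleton_iff]
  tauto

/-- The traces on `E` of convex sets, indexed through `pt`: `u` lies in the triangles `abv` and
`abc`, and `v` in the triangles `acu` and `abc`. -/
def IsConvexTrace (X : Finset (Fin 5)) : Prop :=
  (0 ∈ X → 1 ∈ X → 4 ∈ X → 3 ∈ X) ∧
  (0 ∈ X → 2 ∈ X → 3 ∈ X → 4 ∈ X) ∧
  (0 ∈ X → 1 ∈ X → 2 ∈ X → 3 ∈ X ∧ 4 ∈ X)

instance : DecidablePred IsConvexTrace := fun _ => instDecidableAnd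

def traceHull (X : Finset (Fin 5)) : Finset (Fin 5) :=
  X ∪ (if 0 ∈ X ∧ 1 ∈ X ∧ (4 ∈ X ∨ 2 ∈ X) then {3} else ∅) ∪
    (if 0 ∈ X ∧ 2 ∈ X ∧ (3 ∈ X ∨ 1 ∈ X) then {4} else ∅)

def traceClosure : ClosureOperator (Finset (Fin 5)) :=
  .ofPred traceHull IsConvexTrace (by decide) (by decide) (by decide)

abbrev CoE : Type := traceClosure.Closeds

theorem isConvexTrace_of_convex {C : Set (ℚ × ℚ)} (hC : Convex ℚ C) {X : Finset (Fin 5)}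
    (hX : ∀ i, i ∈ X ↔ pt i ∈ C) : IsConvexTrace X := by
  simp only [IsConvexTrace, hX]
  have comb : ∀ {i j k : Fin 5} (l : Fin 5) (α β γ : ℚ), pt i ∈ C → pt j ∈ C → pt k ∈ C →
      0 ≤ α → 0 ≤ β → 0 ≤ γ → α + β + γ = 1 → pt l = α • pt i + β • pt j + γ • pt k →
      pt l ∈ C := fun l α β γ hi hj hk hα hβ hγ h hl =>
    hl ▸ hC.smul_add_smul_add_smul_mem hi hj hk hα hβ hγ h
  refine ⟨fun ha hb hv => ?_, fun ha hc hu => ?_, fun ha hb hc => ⟨?_, ?_⟩⟩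
  · exact comb 3 (2/7) (4/7) (1/7) ha hb hv (by norm_num) (by norm_num) (by norm_num)
      (by norm_num) (by simp [pt, Pa, Pb, Pu, Pv]; norm_num)
  · exact comb 4 (2/7) (4/7) (1/7) ha hc hu (by norm_num) (by norm_num) (by norm_num)
      (by norm_num) (by simp [pt, Pa, Pc, Pu, Pv]; norm_num)
  · exact comb 3 (1/3) (7/12) (1/12) ha hb hc (by norm_num) (by norm_num) (by norm_num)
      (by norm_num) (by simp [pt, Pa, Pb, Pc, Pu]; norm_num)
  · exact comb 4 (1/3) (1/12) (7/12) ha hb hc (by norm_num) (by norm_num) (by norm_num)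
      (by norm_num) (by simp [pt, Pa, Pb, Pc, Pv]; norm_num)

/-- Each half-plane `(c₁, c₂, r)` stands for `{p | c₁ * p.1 + c₂ * p.2 ≤ r}`. -/
def halfPlanes : List (ℚ × ℚ × ℚ) :=
  [(0, 1, 1), (-1, 0, 1), (1, 0, 1), (3, -2, -6), (-1, 0, 0), (-1, 3, 2), (-3, -2, -6),
    (1, 0, 0), (1, 3, 2)]

def halfPlaneForm (h : ℚ × ℚ × ℚ) : ℚ × ℚ →ₗ[ℚ] ℚ :=
  h.1 • LinearMap.fst ℚ ℚ ℚ + h.2.1 • LinearMap.snd ℚ ℚ ℚ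

theorem exists_halfPlane_separating : ∀ X : Finset (Fin 5), IsConvexTrace X → ∀ j ∉ X,
    ∃ h ∈ halfPlanes, (∀ i ∈ X, halfPlaneForm h (pt i) ≤ h.2.2) ∧
      h.2.2 < halfPlaneForm h (pt j) := by
  -- `Rat` comparisons get stuck in the elaborator's reduction but not in the kernel's.
  decide +kernel

theorem traceClosure_closure_extremePoints : ∀ X, traceClosure.IsClosed X →
    traceClosure (traceClosure.extremePoints X) = X := by
  decide

theorem traceClosure_isClosed_singleton : ∀ i, traceClosure.IsClosed {i} := by decide

theorem traceClosure_isClosed_empty : traceClosure.IsClosed ∅ := by decide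

def atomOf (i : Fin 5) : CoE := ⟨{i}, traceClosure_isClosed_singleton i⟩

theorem thetaPremises_atomOf :
    ThetaPremises (atomOf 0) (atomOf 1) (atomOf 2) (atomOf 3) (atomOf 4) ∧
      ¬ atomOf 3 ≤ atomOf 0 := by
  decide

def toPoints (X : CoE) : Set (ℚ × ℚ) := pt '' (X : Finset (Fin 5))

theorem toPoints_atomOf (i : Fin 5) : toPoints (atomOf i) = {pt i} := by
  simp [toPoints, atomOf]

theorem toPoints_subset_toPoints_iff {X Y : CoE} : toPoints X ⊆ toPoints Y ↔ X ≤ Y := by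
  rw [toPoints, toPoints, Set.image_subset_image_iff pt_injective, Finset.coe_subset]
  rfl

theorem toPoints_injective : Function.Injective toPoints := fun _ _ h =>
  le_antisymm (toPoints_subset_toPoints_iff.mp h.le) (toPoints_subset_toPoints_iff.mp h.ge)

theorem mem_of_pt_mem_convexHull {X : Finset (Fin 5)} (hX : IsConvexTrace X) {j : Fin 5}
    (hj : pt j ∈ convexHull ℚ (pt '' X)) : j ∈ X := by
  by_contra hjX
  obtain ⟨h, -, hle, hlt⟩ := exists_halfPlane_separating X hX j hjX
  exact not_mem_convexHull_of_lt (halfPlaneForm h) (by rintro _ ⟨i, hi, rfl⟩; exact hle i hi)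
    hlt hj

theorem range_toPoints :
    Set.range toPoints = {S | ∃ C : Set (ℚ × ℚ), Convex ℚ C ∧ S = C ∩ Efive} := by
  ext S
  constructor
  · rintro ⟨X, rfl⟩
    refine ⟨convexHull ℚ (toPoints X), convex_convexHull ℚ _, ?_⟩
    rw [← range_pt]
    ext p
    constructor
    · rintro ⟨i, hi, rfl⟩
      exact ⟨subset_convexHull ℚ _ ⟨i, hi, rfl⟩, i, rfl⟩
    · rintro ⟨hp, j, rfl⟩
      exact ⟨j, mem_of_pt_mem_convexHull X.2 hp, rfl⟩
  · rintro ⟨C, hC, rfl⟩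
    classical
    let X : Finset (Fin 5) := {i | pt i ∈ C}
    have hX : ∀ i, i ∈ X ↔ pt i ∈ C := by simp [X]
    refine ⟨⟨X, isConvexTrace_of_convex hC hX⟩, ?_⟩
    rw [toPoints, ← range_pt, ← Set.image_preimage_eq_inter_range]
    congr 1
    ext i
    exact hX i


/-- the lattice `Co(ℚ², {a,b,c,u,v})` of traces on the
five-point set `Efive` of convex subsets of `ℚ²` (presented as a lattice
`CoL` order-isomorphic, via `e`, to the inclusion-ordered family of such
traces) is a finite atomistic join-semidistributive lattice, the singletons
of the five points witness the failure of the quasi-identity `θ` (with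
`u ≰ a`), and consequently `CoL` admits no lattice embedding into any
finite atomistic biatomic join-semidistributive lattice. -/
theorem stmt_16 :
    ∃ (CoL : Type) (_ : Lattice CoL) (_ : Fintype CoL) (_ : OrderBot CoL)
      (e : CoL → Set (ℚ × ℚ)),
      Function.Injective e ∧
      Set.range e = {X | ∃ C : Set (ℚ × ℚ), Convex ℚ C ∧ X = C ∩ Efive} ∧
      (∀ X Y : CoL, X ≤ Y ↔ e X ⊆ e Y) ∧
      AtomisticLat CoL ∧ JoinSemidistributive CoL ∧
      (∃ a b c u v : CoL,
        e a = {Pa} ∧ e b = {Pb} ∧ e c = {Pc} ∧ e u = {Pu} ∧ e v = {Pv} ∧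
        u ≤ a ⊔ b ⊔ v ∧ v ≤ a ⊔ c ⊔ u ∧
        (a ⊔ u) ⊓ (b ⊔ c) ≤ a ∧
        (a ⊔ b) ⊓ (a ⊔ u) = a ∧ (a ⊔ c) ⊓ (a ⊔ v) = a ∧
        (a ⊔ u) ⊓ (a ⊔ v) = a ∧
        ¬ u ≤ a) ∧
      ∀ (M : Type) (_ : Lattice M) (_ : Fintype M) (_ : OrderBot M),
        AtomisticLat M → IsBiatomicLat M → JoinSemidistributive M →
        ¬ ∃ g : CoL → M, Function.Injective g ∧
            (∀ x y : CoL, g (x ⊔ y) = g x ⊔ g y) ∧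
            (∀ x y : CoL, g (x ⊓ y) = g x ⊓ g y) := by
  obtain ⟨hθ, hua⟩ := thetaPremises_atomOf
  refine ⟨CoE, inferInstance, inferInstance, inferInstance, toPoints, toPoints_injective,
    range_toPoints, fun _ _ => toPoints_subset_toPoints_iff.symm,
    ClosureOperator.atomisticLat_closeds traceClosure_isClosed_empty
      traceClosure_isClosed_singleton,
    ClosureOperator.joinSemidistributive_closeds traceClosure_closure_extremePoints,
    ⟨atomOf 0, atomOf 1, atomOf 2, atomOf 3, atomOf 4, toPoints_atomOf 0, toPoints_atomOf 1,
      toPoints_atomOf 2, toPoints_atomOf 3, toPoints_atomOf 4, hθ.1, hθ.2.1, hθ.2.2.1,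
      hθ.2.2.2.1, hθ.2.2.2.2.1, hθ.2.2.2.2.2, hua⟩, ?_⟩
  rintro M _ _ _ hA hB hJ ⟨g, hg, hsup, hinf⟩
  let f : LatticeHom CoE M := ⟨⟨g, hsup⟩, hinf⟩
  exact hua ((f.le_iff_le_of_injective hg).mp ((hθ.map f).le hA hB hJ))
end

section
/- Let M be a noetherian, atomistic, biatomic, join-semidistributive lattice with zero, and let a, b, c, u, v ∈ M satisfy the premise of θ with u ≰ a and v ≰ a. Let S be the set of atoms of M not below a. Then there exist finite joins u₀, v₀ of elements of S such that u₀ ≤ u, v₀ ≤ v, u₀ ≤ a ∨ b ∨ v₀, and v₀ ≤ a ∨ c ∨ u₀. -/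
theorem NoetherianOrd.exists_finset_subset_forall_le_sup {L : Type*} [SemilatticeSup L]
    [OrderBot L] (hN : NoetherianOrd L) {s : Set L} (hs : s.Nonempty) :
    ∃ W : Finset L, W.Nonempty ∧ ↑W ⊆ s ∧ ∀ p ∈ s, p ≤ W.sup id := by
  classical
  obtain ⟨p₀, hp₀⟩ := hs
  obtain ⟨_, ⟨W, ⟨hWne, hWs⟩, rfl⟩, hmax⟩ :=
    hN ((fun W : Finset L => W.sup id) '' {W | W.Nonempty ∧ ↑W ⊆ s})
      ⟨_, {p₀}, ⟨Finset.singleton_nonempty p₀, by simpa using hp₀⟩, rfl⟩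
  refine ⟨W, hWne, hWs, fun p hp => ?_⟩
  have hpW : insert p W ∈ {W : Finset L | W.Nonempty ∧ ↑W ⊆ s} :=
    ⟨Finset.insert_nonempty p W, by simpa [Set.insert_subset_iff] using ⟨hp, hWs⟩⟩
  have hle : W.sup id ≤ (insert p W).sup id := Finset.sup_mono (Finset.subset_insert p W)
  have heq : W.sup id = (insert p W).sup id :=
    hle.lt_or_eq.resolve_left (hmax _ ⟨_, hpW, rfl⟩)
  rw [heq]
  exact Finset.le_sup (f := id) (Finset.mem_insert_self p W)

theorem AtomisticLat.exists_atom_le_not_le {L : Type*} [Lattice L] [OrderBot L]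
    (hA : AtomisticLat L) {w a : L} (hwa : ¬ w ≤ a) : ∃ p, IsAtom p ∧ p ≤ w ∧ ¬ p ≤ a := by
  obtain ⟨s, hs, hsw⟩ := hA w
  by_contra! h
  exact hwa (hsw.2 fun p hp => h p (hs p hp) (hsw.1 hp))

theorem exists_finset_atoms_covering {L : Type*} [Lattice L] [OrderBot L]
    (hN : NoetherianOrd L) (hA : AtomisticLat L) {w a : L} (hwa : ¬ w ≤ a) :
    ∃ W : Finset L, W.Nonempty ∧ (∀ p ∈ W, IsAtom p ∧ p ≤ w ∧ ¬ p ≤ a) ∧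
      ∀ p, IsAtom p → p ≤ w → ¬ p ≤ a → p ≤ W.sup id := by
  obtain ⟨W, hWne, hWs, hW⟩ := hN.exists_finset_subset_forall_le_sup
    (s := {p | IsAtom p ∧ p ≤ w ∧ ¬ p ≤ a}) (hA.exists_atom_le_not_le hwa)
  exact ⟨W, hWne, fun p hp => hWs hp, fun p hp hpw hpa => hW p ⟨hp, hpw, hpa⟩⟩

theorem IsBiatomicLat.exists_atom_le_of_le_sup {L : Type*} [Lattice L] [OrderBot L]
    (hB : IsBiatomicLat L) {p x w : L} (hp : IsAtom p) (hpxw : p ≤ x ⊔ w) (hpx : ¬ p ≤ x) :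
    ∃ y, IsAtom y ∧ y ≤ w ∧ ¬ y ≤ x ∧ p ≤ x ⊔ y := by
  have hw : w ≠ ⊥ := by
    rintro rfl
    exact hpx (by simpa using hpxw)
  by_cases hx : x = ⊥
  · subst hx
    exact ⟨p, hp, by simpa using hpxw, hpx, le_sup_right⟩
  obtain ⟨x', y, -, hx'x, hy, hyw, hpx'y⟩ := hB.2 p x w hp hx hw hpxw
  refine ⟨y, hy, hyw, fun hyx => hpx (hpx'y.trans (sup_le hx'x hyx)), ?_⟩
  exact hpx'y.trans (sup_le_sup_right hx'x y)

theorem IsBiatomicLat.finset_sup_le_sup {L : Type*} [Lattice L] [OrderBot L]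
    (hB : IsBiatomicLat L) {a x w : L} (hax : a ≤ x) {U W : Finset L}
    (hU : ∀ p ∈ U, IsAtom p ∧ p ≤ x ⊔ w ∧ ¬ p ≤ x)
    (hW : ∀ q, IsAtom q → q ≤ w → ¬ q ≤ a → q ≤ W.sup id) :
    U.sup id ≤ x ⊔ W.sup id := by
  refine Finset.sup_le fun p hpU => ?_
  obtain ⟨hp, hpxw, hpx⟩ := hU p hpU
  obtain ⟨y, hy, hyw, hyx, hpxy⟩ := hB.exists_atom_le_of_le_sup hp hpxw hpx
  exact hpxy.trans (sup_le_sup_left (hW y hy hyw fun hya => hyx (hya.trans hax)) x)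

theorem stmt_17_general (M : Type) [Lattice M] [OrderBot M]
    (hN : NoetherianOrd M) (hA : AtomisticLat M) (hB : IsBiatomicLat M)
    (a b c u v : M)
    (h1 : u ≤ a ⊔ b ⊔ v) (h2 : v ≤ a ⊔ c ⊔ u)
    (h4 : (a ⊔ b) ⊓ (a ⊔ u) = a)
    (h5 : (a ⊔ c) ⊓ (a ⊔ v) = a)
    (hu : ¬ u ≤ a) (hv : ¬ v ≤ a) :
    ∃ U V : Finset M, U.Nonempty ∧ V.Nonempty ∧
      (∀ p ∈ U, IsAtom p ∧ ¬ p ≤ a) ∧ (∀ p ∈ V, IsAtom p ∧ ¬ p ≤ a) ∧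
      U.sup id ≤ u ∧ V.sup id ≤ v ∧
      U.sup id ≤ a ⊔ b ⊔ V.sup id ∧ V.sup id ≤ a ⊔ c ⊔ U.sup id := by
  obtain ⟨U, hUne, hU, hUcov⟩ := exists_finset_atoms_covering hN hA hu
  obtain ⟨V, hVne, hV, hVcov⟩ := exists_finset_atoms_covering hN hA hv
  refine ⟨U, V, hUne, hVne, fun p hp => ⟨(hU p hp).1, (hU p hp).2.2⟩,
    fun p hp => ⟨(hV p hp).1, (hV p hp).2.2⟩, Finset.sup_le fun p hp => (hU p hp).2.1,
    Finset.sup_le fun p hp => (hV p hp).2.1, ?_, ?_⟩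
  · refine hB.finset_sup_le_sup le_sup_left (fun p hp => ?_) hVcov
    obtain ⟨hpat, hpu, hpa⟩ := hU p hp
    exact ⟨hpat, hpu.trans h1,
      fun hpab => hpa (h4 ▸ le_inf hpab (hpu.trans le_sup_right))⟩
  · refine hB.finset_sup_le_sup le_sup_left (fun q hq => ?_) hUcov
    obtain ⟨hqat, hqv, hqa⟩ := hV q hq
    exact ⟨hqat, hqv.trans h2,
      fun hqac => hqa (h5 ▸ le_inf hqac (hqv.trans le_sup_right))⟩

theorem stmt_17 (M : Type) [Lattice M] [OrderBot M]
    (hN : NoetherianOrd M) (hA : AtomisticLat M) (hB : IsBiatomicLat M)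
    (hSD : JoinSemidistributive M)
    (a b c u v : M)
    (h1 : u ≤ a ⊔ b ⊔ v) (h2 : v ≤ a ⊔ c ⊔ u)
    (h3 : (a ⊔ u) ⊓ (b ⊔ c) ≤ a)
    (h4 : (a ⊔ b) ⊓ (a ⊔ u) = a)
    (h5 : (a ⊔ c) ⊓ (a ⊔ v) = a)
    (h6 : (a ⊔ u) ⊓ (a ⊔ v) = a)
    (hu : ¬ u ≤ a) (hv : ¬ v ≤ a) :
    ∃ U V : Finset M, U.Nonempty ∧ V.Nonempty ∧
      (∀ p ∈ U, IsAtom p ∧ ¬ p ≤ a) ∧ (∀ p ∈ V, IsAtom p ∧ ¬ p ≤ a) ∧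
      U.sup id ≤ u ∧ V.sup id ≤ v ∧
      U.sup id ≤ a ⊔ b ⊔ V.sup id ∧ V.sup id ≤ a ⊔ c ⊔ U.sup id :=
  stmt_17_general M hN hA hB a b c u v h1 h2 h4 h5 hu hv
end

section
/- Let L be a finite atomistic lattice, (a;M) an extension pair with closure operator f, and suppose L(a;M) is constructed with new atom p*. For all x, y ∈ L: p* ≤ x holds in L(a;M) if and only if a ≤ x, and x ≤ p* ∨ y holds in L(a;M) if and only if x ≤ f(y). -/
/-!
If an element of `K` is least with some property of its image under the order embedding `e`,
then `e` maps it to the least element of `LaMSet L a M` with that property. Hence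
`e (j x) = (x, decide (a ≤ x))` and `e (p* ⊔ j y) = (f y, true)`, and both equivalences are
read off componentwise in `L × Bool`.
-/

theorem eq_of_isLeast_of_isLeast_range {K P : Type*} [Preorder K] [PartialOrder P]
    {e : K → P} (he : Monotone e) {φ : P → Prop} {z : K} {q : P}
    (hz : IsLeast {w | φ (e w)} z) (hq : IsLeast {r ∈ Set.range e | φ r} q) : e z = q := by
  obtain ⟨⟨w, rfl⟩, hφw⟩ := hq.1
  exact le_antisymm (he (hz.2 hφw)) (hq.2 ⟨⟨z, rfl⟩, hz.1⟩)

section LaMSet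

variable {L : Type*} [Lattice L] [BoundedOrder L] {a : L} {M : Set L}

theorem isLeast_laMSet_ge_false [DecidableLE L] (hup : ∀ x, a ≤ x → x ∈ M) (x : L) :
    IsLeast {r ∈ LaMSet L a M | (x, false) ≤ r} (x, decide (a ≤ x)) := by
  refine ⟨⟨?_, le_rfl, Bool.false_le _⟩, ?_⟩
  · by_cases hax : a ≤ x
    · exact Or.inr ⟨by simp [hax], hup x hax⟩
    · exact Or.inl ⟨by simp [hax], hax⟩
  · rintro ⟨r, b⟩ ⟨hr, hxr, -⟩
    refine ⟨hxr, ?_⟩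
    rcases hr with ⟨rfl, har⟩ | ⟨rfl, -⟩
    · exact (decide_eq_false fun hax => har (hax.trans hxr)).le
    · exact Bool.le_true _

theorem isLeast_laMSet_ge_bot_true {x c : L} (hc : IsLeast {y | y ∈ M ∧ x ≤ y} c) (b : Bool) :
    IsLeast {r ∈ LaMSet L a M | (⊥, true) ≤ r ∧ (x, b) ≤ r} (c, true) := by
  refine ⟨⟨Or.inr ⟨rfl, hc.1.1⟩, ⟨bot_le, le_rfl⟩, ⟨hc.1.2, Bool.le_true _⟩⟩, ?_⟩
  rintro ⟨r, b'⟩ ⟨hr, ⟨-, htrue⟩, ⟨hxr, -⟩⟩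
  rcases hr with ⟨rfl, -⟩ | ⟨rfl, hrM⟩
  · exact absurd htrue (by simp)
  · exact ⟨hc.2 ⟨hrM, hxr⟩, le_rfl⟩

end LaMSet

/-- `L(a;M)` is presented as a lattice `K` order-isomorphic, via `e`, to the subposet
`LaMSet L a M` of `L × 2`, with canonical embedding `j` and new atom `pstar`. -/
theorem stmt_19_general (L : Type) [Lattice L] [BoundedOrder L]
    (a : L) (M : Set L) (h : ExtensionPair L a M)
    (f : L → L) (hf : ∀ x : L, IsLeast {y : L | y ∈ M ∧ x ≤ y} (f x))
    (K : Type) [Lattice K] (e : K → L × Bool)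
    (hrange : Set.range e = LaMSet L a M)
    (hmono : ∀ x y : K, x ≤ y ↔ e x ≤ e y)
    (j : L → K)
    (hj : ∀ x : L, IsLeast {z : K | ((x, false) : L × Bool) ≤ e z} (j x))
    (pstar : K) (hpstar : e pstar = ((⊥ : L), true)) :
    ∀ x y : L, (pstar ≤ j x ↔ a ≤ x) ∧ (j x ≤ pstar ⊔ j y ↔ x ≤ f y) := by
  classical
  obtain ⟨-, -, -, -, hup⟩ := h
  have he : Monotone e := fun u v huv => (hmono u v).1 huv
  have hej (x : L) : e (j x) = (x, decide (a ≤ x)) :=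
    eq_of_isLeast_of_isLeast_range he (hj x)
      (hrange ▸ isLeast_laMSet_ge_false hup x)
  have hesup (y : L) : e (pstar ⊔ j y) = (f y, true) := by
    have hlub : IsLeast {w | e pstar ≤ e w ∧ e (j y) ≤ e w} (pstar ⊔ j y) :=
      ⟨⟨he le_sup_left, he le_sup_right⟩,
        fun w ⟨hpw, hjw⟩ => sup_le ((hmono _ _).2 hpw) ((hmono _ _).2 hjw)⟩
    refine eq_of_isLeast_of_isLeast_range (φ := fun r => e pstar ≤ r ∧ e (j y) ≤ r) he hlub ?_
    rw [hpstar, hej, hrange]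
    exact isLeast_laMSet_ge_bot_true (hf y) _
  intro x y
  rw [hmono, hmono, hpstar, hej, hesup]
  simp [Prod.mk_le_mk, Bool.le_iff_imp]

/-- in `L(a;M)` (presented as a lattice `K` order-isomorphic to
the subposet `LaMSet L a M` of `L × 2`, with canonical embedding `j` and new
atom `p*`), for all `x, y ∈ L`: `p* ≤ x` iff `a ≤ x`, and `x ≤ p* ⊔ y` iff
`x ≤ f y`, where `f` is the closure operator associated with `M`. -/
theorem stmt_19 (L : Type) [Lattice L] [Fintype L] [BoundedOrder L]
    (hA : AtomisticLat L) (a : L) (M : Set L) (h : ExtensionPair L a M)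
    (f : L → L) (hf : ∀ x : L, IsLeast {y : L | y ∈ M ∧ x ≤ y} (f x))
    (K : Type) [Lattice K] (e : K → L × Bool)
    (hrange : Set.range e = LaMSet L a M)
    (hmono : ∀ x y : K, x ≤ y ↔ e x ≤ e y)
    (j : L → K)
    (hj : ∀ x : L, IsLeast {z : K | ((x, false) : L × Bool) ≤ e z} (j x))
    (pstar : K) (hpstar : e pstar = ((⊥ : L), true)) :
    ∀ x y : L, (pstar ≤ j x ↔ a ≤ x) ∧ (j x ≤ pstar ⊔ j y ↔ x ≤ f y) :=
  stmt_19_general L a M h f hf K e hrange hmono j hj pstar hpstar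
end
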